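/- arXiv:2006.08704 — 6 statements merged into one kernel-verified Lean document; each statement's English description precedes it below -/
import Mathlib

section
/- Let G be a group and n ≥ 2. The direct product G × ℤ/nℤ is circularly-orderable if and only if there exist an inhomogeneous circular ordering f on G, a normalized ℤ-valued inhomogeneous 2-cocycle u : G × G → ℤ (i.e., u(1,g) = u(g,1) = 0 for all g and u(h,k) − u(gh,k) + u(g,hk) − u(g,h) = 0 for all g,h,k), and a function d : G → ℤ such that f(g,h) = n·u(g,h) + d(g) + d(h) − d(gh) for all g,h ∈ G (i.e., [f] = n·[u] in H²(G;ℤ)). -/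
/-- An inhomogeneous circular ordering on a group `G`. -/
def IsCircularOrdering {G : Type*} [Group G] (f : G → G → ℤ) : Prop :=
  (∀ g h : G, f g h = 0 ∨ f g h = 1) ∧
  (∀ g : G, f 1 g = 0 ∧ f g 1 = 0) ∧
  (∀ g : G, g ≠ 1 → f g g⁻¹ = 1) ∧
  (∀ g h k : G, f h k - f (g * h) k + f g (h * k) - f g h = 0)

/-- A group is circularly-orderable if it admits an inhomogeneous circular ordering. -/
def CircularlyOrderable (G : Type*) [Group G] : Prop :=
  ∃ f : G → G → ℤ, IsCircularOrdering f

/-- A group is left-orderable if it admits a strict total order invariant under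
left multiplication. -/
def LeftOrderable (G : Type*) [Group G] : Prop :=
  ∃ r : G → G → Prop, IsStrictTotalOrder G r ∧ ∀ a b c : G, r b c → r (a * b) (a * c)


namespace CircAux

structure CO (Γ : Type*) [Group Γ] where
  F : Γ → Γ → ℤ
  h01 : ∀ g h, F g h = 0 ∨ F g h = 1
  hl : ∀ g, F 1 g = 0
  hr : ∀ g, F g 1 = 0
  hinv : ∀ g, g ≠ 1 → F g g⁻¹ = 1
  hcoc : ∀ g h k, F h k - F (g * h) k + F g (h * k) - F g h = 0

variable {Γ : Type*} [Group Γ]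

lemma CO.inv_symm (c : CO Γ) (g : Γ) : c.F g⁻¹ g = c.F g g⁻¹ := by
  by_cases hg : g = 1
  · subst hg; simp [c.hl]
  · rw [c.hinv g hg]
    have := c.hinv g⁻¹ (by simpa using hg)
    simpa using this

@[ext]
structure E {Γ : Type*} [Group Γ] (c : CO Γ) where
  x : Γ
  a : ℤ

namespace E

variable {c : CO Γ}

instance : Mul (E c) := ⟨fun e f => ⟨e.x * f.x, e.a + f.a + c.F e.x f.x⟩⟩
instance : One (E c) := ⟨⟨1, 0⟩⟩
instance : Inv (E c) := ⟨fun e => ⟨e.x⁻¹, -e.a - c.F e.x e.x⁻¹⟩⟩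

@[simp] lemma mul_x (e f : E c) : (e * f).x = e.x * f.x := rfl
@[simp] lemma mul_a (e f : E c) : (e * f).a = e.a + f.a + c.F e.x f.x := rfl
@[simp] lemma one_x : (1 : E c).x = 1 := rfl
@[simp] lemma one_a : (1 : E c).a = 0 := rfl
@[simp] lemma inv_x (e : E c) : (e⁻¹).x = e.x⁻¹ := rfl
@[simp] lemma inv_a (e : E c) : (e⁻¹).a = -e.a - c.F e.x e.x⁻¹ := rfl

instance : Group (E c) where
  mul_assoc e f g := by
    have h := c.hcoc e.x f.x g.x
    ext
    · simp [mul_assoc]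
    · simp only [mul_x, mul_a]
      omega
  one_mul e := by ext <;> simp [c.hl]
  mul_one e := by ext <;> simp [c.hr]
  inv_mul_cancel e := by
    ext
    · simp
    · simp only [mul_x, mul_a, inv_x, inv_a, c.inv_symm, one_a]
      ring

/-- projection to `Γ` as a monoid hom -/
def px : E c →* Γ where
  toFun := E.x
  map_one' := rfl
  map_mul' _ _ := rfl

@[simp] lemma px_apply (e : E c) : px e = e.x := rfl

@[simp] lemma pow_x (e : E c) (k : ℕ) : (e ^ k).x = e.x ^ k := by
  simpa using (px (c := c)).map_pow e k

@[simp] lemma zpow_x (e : E c) (k : ℤ) : (e ^ k).x = e.x ^ k := by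
  simpa using (px (c := c)).map_zpow e k

/-- the central element -/
def z (c : CO Γ) : E c := ⟨1, 1⟩

lemma z_central (e : E c) : z c * e = e * z c := by
  ext <;> simp [z, c.hl, c.hr] <;> ring

@[simp] lemma z_zpow (k : ℤ) : (z c) ^ k = (⟨1, k⟩ : E c) := by
  induction k using Int.induction_on with
  | zero => rfl
  | succ i ih => rw [zpow_add_one, ih]; ext <;> simp [z, c.hr]
  | pred i ih =>
      rw [zpow_sub_one, ih]
      have : ((z c)⁻¹ : E c) = ⟨1, -1⟩ := by ext <;> simp [z, c.hl]
      rw [this]; ext <;> simp [c.hr] <;> ring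

lemma z_zpow_inj {k l : ℤ} (h : (z c) ^ k = (z c) ^ l) : k = l := by
  have := congrArg E.a h
  simpa using this


variable {Γ : Type*} [Group Γ] {c : CO Γ}

/-- positivity cone in `E c` -/
def pos (e : E c) : Prop := 1 ≤ e.a ∨ (e.a = 0 ∧ e.x ≠ 1)

lemma F_nonneg (g h : Γ) : 0 ≤ c.F g h := by rcases c.h01 g h with h' | h' <;> omega
lemma F_le_one (g h : Γ) : c.F g h ≤ 1 := by rcases c.h01 g h with h' | h' <;> omega

lemma not_pos_one : ¬ pos (1 : E c) := by simp [pos]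

lemma pos_mul {e f : E c} (he : pos e) (hf : pos f) : pos (e * f) := by
  rcases he with h1 | ⟨h1, h1'⟩ <;> rcases hf with h2 | ⟨h2, h2'⟩
  · left; have := F_nonneg (c := c) e.x f.x; simp only [mul_a]; omega
  · left; have := F_nonneg (c := c) e.x f.x; simp only [mul_a]; omega
  · left; have := F_nonneg (c := c) e.x f.x; simp only [mul_a]; omega
  · by_cases hxy : e.x * f.x = 1
    · left
      have hfe : f.x = e.x⁻¹ := (inv_eq_of_mul_eq_one_right hxy).symm
      have hf : c.F e.x f.x = 1 := by rw [hfe]; exact c.hinv e.x h1'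
      simp only [mul_a]; omega
    · have := F_nonneg (c := c) e.x f.x
      rcases eq_or_lt_of_le this with hF | hF
      · right; constructor
        · simp only [mul_a]; omega
        · simpa using hxy
      · left; simp only [mul_a]; omega

lemma pos_not_inv {e : E c} (he : pos e) : ¬ pos e⁻¹ := by
  intro hi
  have := pos_mul hi he
  simp only [inv_mul_cancel] at this
  exact not_pos_one this

lemma pos_or {e : E c} (he : e ≠ 1) : pos e ∨ pos e⁻¹ := by
  by_cases h1 : 1 ≤ e.a
  · left; exact Or.inl h1
  by_cases h0 : e.a = 0
  · left; right
    refine ⟨h0, fun hx => he ?_⟩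
    ext <;> simp [hx, h0]
  · right
    have ha : e.a ≤ -1 := by omega
    have hF := F_le_one (c := c) e.x e.x⁻¹
    have hF0 := F_nonneg (c := c) e.x e.x⁻¹
    by_cases hb : -e.a - c.F e.x e.x⁻¹ = 0
    · right
      refine ⟨by simpa using hb, ?_⟩
      have : c.F e.x e.x⁻¹ = 1 := by omega
      have hx : e.x ≠ 1 := by
        intro hx; rw [hx] at this; simp [c.hl] at this
      simpa using hx
    · left; simp only [inv_a]; omega

/-- strict order: `e < f` -/
def lt (e f : E c) : Prop := pos (e⁻¹ * f)

/-- `e ≤ f` -/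
def le (e f : E c) : Prop := e = f ∨ lt e f

lemma lt_irrefl (e : E c) : ¬ lt e e := by simp only [lt, inv_mul_cancel]; exact not_pos_one

lemma lt_trans {e f g : E c} (h1 : lt e f) (h2 : lt f g) : lt e g := by
  have := pos_mul h1 h2
  simpa [lt, mul_assoc] using this

lemma lt_asymm {e f : E c} (h1 : lt e f) (h2 : lt f e) : False :=
  lt_irrefl e (lt_trans h1 h2)

lemma lt_or_lt {e f : E c} (h : e ≠ f) : lt e f ∨ lt f e := by
  have : e⁻¹ * f ≠ 1 := by
    intro h'; exact h (by simpa [eq_comm] using (eq_inv_of_mul_eq_one_left h').symm)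
  rcases pos_or this with h' | h'
  · left; exact h'
  · right; simpa [lt, mul_inv_rev] using h'

lemma le_trans {e f g : E c} (h1 : le e f) (h2 : le f g) : le e g := by
  rcases h1 with rfl | h1
  · exact h2
  rcases h2 with rfl | h2
  · exact Or.inr h1
  · exact Or.inr (lt_trans h1 h2)

lemma le_lt_trans {e f g : E c} (h1 : le e f) (h2 : lt f g) : lt e g := by
  rcases h1 with rfl | h1
  · exact h2
  · exact lt_trans h1 h2

lemma lt_le_trans {e f g : E c} (h1 : lt e f) (h2 : le f g) : lt e g := by
  rcases h2 with rfl | h2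
  · exact h1
  · exact lt_trans h1 h2

lemma not_lt_of_le {e f : E c} (h : le e f) (h' : lt f e) : False := by
  rcases h with rfl | h
  · exact lt_irrefl e h'
  · exact lt_asymm h h'

lemma le_of_not_lt {e f : E c} (h : ¬ lt f e) : le e f := by
  by_cases hef : e = f
  · exact Or.inl hef
  · rcases lt_or_lt hef with h' | h'
    · exact Or.inr h'
    · exact absurd h' h

lemma lt_mul_left (a : E c) {e f : E c} (h : lt e f) : lt (a * e) (a * f) := by
  simpa [lt, mul_assoc] using h

lemma le_mul_left (a : E c) {e f : E c} (h : le e f) : le (a * e) (a * f) := by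
  rcases h with rfl | h
  · exact Or.inl rfl
  · exact Or.inr (lt_mul_left a h)

lemma lt_one_iff_pos {e : E c} : lt 1 e ↔ pos e := by simp [lt]

lemma pos_pow {e : E c} (he : pos e) : ∀ j : ℕ, pos (e ^ (j + 1))
  | 0 => by simpa using he
  | (j + 1) => by
      have := pos_mul (pos_pow he j) he
      rwa [← pow_succ] at this

lemma pow_ne_one {e : E c} (he : e ≠ 1) {j : ℕ} (hj : 0 < j) : e ^ j ≠ 1 := by
  obtain ⟨i, rfl⟩ : ∃ i, j = i + 1 := ⟨j - 1, by omega⟩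
  rcases pos_or he with h | h
  · intro h1
    have := pos_pow h i
    rw [h1] at this
    exact not_pos_one this
  · intro h1
    have := pos_pow h i
    rw [inv_pow, h1, inv_one] at this
    exact not_pos_one this

section Tsec
variable (c : CO Γ) (t : Γ)

/-- lift of `t` -/
def T : E c := ⟨t, 0⟩

@[simp] lemma T_x : (T c t).x = t := rfl
@[simp] lemma T_a : (T c t).a = 0 := rfl

lemma z_zpow_central (k : ℤ) (e : E c) : (z c) ^ k * e = e * (z c) ^ k := by
  rw [z_zpow]
  ext
  · simp
  · simp [c.hl, c.hr]; ring

lemma T_mul (htc : ∀ x : Γ, t * x = x * t) (y : E c) :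
    (T c t) * y = y * (T c t) * (z c) ^ (c.F t y.x - c.F y.x t) := by
  rw [z_zpow]
  ext
  · simp [htc]
  · simp [c.hr]

lemma T_pow_mul (htc : ∀ x : Γ, t * x = x * t) (y : E c) (j : ℕ) :
    (T c t) ^ j * y = y * (T c t) ^ j * (z c) ^ ((j : ℤ) * (c.F t y.x - c.F y.x t)) := by
  set D := c.F t y.x - c.F y.x t with hD
  induction j with
  | zero => simp
  | succ j ih =>
      have swap : ∀ (k l : ℤ) (e : E c), (z c)^k * (e * (z c)^l) = e * (z c)^(k+l) := by
        intro k l e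
        rw [← mul_assoc, z_zpow_central, mul_assoc, ← zpow_add]
      have harith : ((j+1 : ℕ) : ℤ) * D = D + (j : ℤ) * D := by push_cast; ring
      rw [pow_succ', mul_assoc, ih, ← mul_assoc, ← mul_assoc, T_mul c t htc y,
          mul_assoc, mul_assoc, swap, ← mul_assoc, mul_assoc y (T c t), ← pow_succ', harith,
          zpow_add]

variable (n : ℕ)

/-- `T^n = z^m` -/
def mdef : ℤ := ((T c t) ^ n).a

lemma T_pow_n (htn : t ^ n = 1) : (T c t) ^ n = (z c) ^ (mdef c t n) := by
  rw [z_zpow]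
  ext
  · simp [htn]
  · simp [mdef]

lemma F_t_comm (htc : ∀ x : Γ, t * x = x * t) (hn2 : 2 ≤ n) (htn : t ^ n = 1) (x : Γ) :
    c.F t x = c.F x t := by
  have h := T_pow_mul c t htc (⟨x, 0⟩ : E c) n
  rw [T_pow_n c t n htn, z_zpow_central] at h
  have h2 : (⟨x,0⟩ : E c) * (z c) ^ (mdef c t n) =
      (⟨x,0⟩ : E c) * ((z c) ^ (mdef c t n) * (z c) ^ ((n : ℤ) * (c.F t x - c.F x t))) := by
    rw [← mul_assoc]; exact h
  have h3 := mul_left_cancel h2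
  have h4 : (z c) ^ (mdef c t n) = (z c) ^ (mdef c t n + (n : ℤ) * (c.F t x - c.F x t)) := by
    rw [zpow_add]; exact h3
  have h5 := z_zpow_inj h4
  have hn0 : (n : ℤ) ≠ 0 := by exact_mod_cast (by omega : n ≠ 0)
  have h6 : (n : ℤ) * (c.F t x - c.F x t) = 0 := by omega
  rcases mul_eq_zero.mp h6 with h | h
  · exact absurd h hn0
  · omega

lemma T_central (htc : ∀ x : Γ, t * x = x * t) (hn2 : 2 ≤ n) (htn : t ^ n = 1) (y : E c) :
    (T c t) * y = y * (T c t) := by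
  have h := T_mul c t htc y
  rw [F_t_comm c t n htc hn2 htn] at h
  simpa using h

lemma gcd_eq_one (htc : ∀ x : Γ, t * x = x * t) (hn2 : 2 ≤ n) (htn : t ^ n = 1)
    (hto : ∀ j : ℕ, 0 < j → j < n → t ^ j ≠ 1) :
    Int.gcd (n : ℤ) (mdef c t n) = 1 := by
  set m := mdef c t n with hm
  set e := Int.gcd (n : ℤ) m with he
  have hdn : (e : ℤ) ∣ (n : ℤ) := Int.gcd_dvd_left _ _
  have hdm : (e : ℤ) ∣ m := Int.gcd_dvd_right _ _
  have hen : e ∣ n := by exact_mod_cast hdn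
  have he0 : e ≠ 0 := by
    intro h0
    rw [h0] at hdn
    have : (n : ℤ) = 0 := by simpa using hdn
    omega
  by_contra hne
  have he2 : 2 ≤ e := by omega
  set p := n / e with hp
  set q := m / (e : ℤ) with hq
  have hpe : p * e = n := Nat.div_mul_cancel hen
  have hqe : q * (e : ℤ) = m := Int.ediv_mul_cancel hdm
  set v := (z c) ^ (-q) * (T c t) ^ p with hv
  have hzc : ∀ y : E c, Commute (z c) y := fun y => z_central y
  have hcomm : Commute ((z c) ^ (-q)) ((T c t) ^ p) :=
    ((hzc (T c t)).zpow_left (-q)).pow_right p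
  have hvpow : v ^ e = 1 := by
    rw [hv, hcomm.mul_pow]
    have h1 : ((z c) ^ (-q)) ^ e = (z c) ^ (-m) := by
      rw [← zpow_natCast ((z c) ^ (-q)) e, ← zpow_mul]
      congr 1
      rw [neg_mul, hqe]
    have h2 : ((T c t) ^ p) ^ e = (T c t) ^ n := by rw [← pow_mul, hpe]
    rw [h1, h2, T_pow_n c t n htn, ← zpow_add]
    rw [hm, neg_add_cancel, zpow_zero]
  have hp0 : 0 < p := Nat.div_pos (Nat.le_of_dvd (by omega) hen) (by omega)
  have hpn : p < n := Nat.div_lt_self (by omega) (by omega)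
  have hvne : v ≠ 1 := by
    intro h0
    have hx := congrArg E.x h0
    have : t ^ p = 1 := by simpa [hv] using hx
    exact hto p hp0 hpn this
  exact pow_ne_one hvne (by omega : 0 < e) hvpow

/-- the `n`-th root of `z` -/
def wdef : E c :=
  (z c) ^ (Int.gcdA (n : ℤ) (mdef c t n)) * (T c t) ^ (Int.gcdB (n : ℤ) (mdef c t n))

lemma w_central (htc : ∀ x : Γ, t * x = x * t) (hn2 : 2 ≤ n) (htn : t ^ n = 1) (y : E c) :
    (wdef c t n) * y = y * (wdef c t n) := by
  have hzc : Commute (z c) y := z_central y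
  have hTc : Commute (T c t) y := T_central c t n htc hn2 htn y
  exact ((hzc.zpow_left _).mul_left (hTc.zpow_left _))

lemma w_pow_n (htc : ∀ x : Γ, t * x = x * t) (hn2 : 2 ≤ n) (htn : t ^ n = 1)
    (hto : ∀ j : ℕ, 0 < j → j < n → t ^ j ≠ 1) :
    (wdef c t n) ^ n = z c := by
  set α := Int.gcdA (n : ℤ) (mdef c t n)
  set β := Int.gcdB (n : ℤ) (mdef c t n)
  have hzc : ∀ y : E c, Commute (z c) y := fun y => z_central y
  have hcomm : Commute ((z c) ^ α) ((T c t) ^ β) :=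
    ((hzc (T c t)).zpow_left α).zpow_right β
  rw [wdef, hcomm.mul_pow]
  have h1 : ((z c) ^ α) ^ n = (z c) ^ (α * (n : ℤ)) := by
    rw [← zpow_natCast ((z c) ^ α) n, ← zpow_mul]
  have h2 : ((T c t) ^ β) ^ n = (z c) ^ (mdef c t n * β) := by
    rw [← zpow_natCast ((T c t) ^ β) n, ← zpow_mul, mul_comm β (n : ℤ), zpow_mul,
      zpow_natCast, T_pow_n c t n htn, ← zpow_mul]
  rw [h1, h2, ← zpow_add]
  have hbez := Int.gcd_eq_gcd_ab (n : ℤ) (mdef c t n)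
  rw [gcd_eq_one c t n htc hn2 htn hto] at hbez
  have : α * (n : ℤ) + mdef c t n * β = 1 := by
    push_cast at hbez
    linear_combination -hbez
  rw [this, zpow_one]

lemma pos_z : pos (z c) := Or.inl le_rfl

lemma w_pos (htc : ∀ x : Γ, t * x = x * t) (hn2 : 2 ≤ n) (htn : t ^ n = 1)
    (hto : ∀ j : ℕ, 0 < j → j < n → t ^ j ≠ 1) :
    pos (wdef c t n) := by
  set w := wdef c t n with hw
  have hwn : w ^ n = z c := w_pow_n c t n htc hn2 htn hto
  by_cases h1 : w = 1
  · rw [h1, one_pow] at hwn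
    have := congrArg E.a hwn
    simp [z] at this
  rcases pos_or h1 with h | h
  · exact h
  · exfalso
    have hpw : pos ((w⁻¹) ^ ((n - 1) + 1)) := pos_pow h (n - 1)
    have hn1 : (n - 1) + 1 = n := by omega
    rw [hn1, inv_pow, hwn] at hpw
    exact pos_not_inv (pos_z c) hpw

section Wgeneric
variable {c} (w : E c)

lemma zpow_pos_of_pos (hw : pos w) {k : ℤ} (hk : 1 ≤ k) : pos (w ^ k) := by
  obtain ⟨j, hj⟩ : ∃ j : ℕ, k = (j : ℤ) + 1 := ⟨(k - 1).toNat, by omega⟩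
  rw [hj]
  have : w ^ ((j : ℤ) + 1) = w ^ (j + 1) := by
    rw [← zpow_natCast]
    push_cast
    ring_nf
  rw [this]
  exact pos_pow hw j

lemma not_pos_zpow_of_nonpos (hw : pos w) {k : ℤ} (hk : k ≤ 0) : ¬ pos (w ^ k) := by
  rcases eq_or_lt_of_le hk with rfl | hk'
  · simpa using not_pos_one
  · intro h
    have h2 : pos (w ^ (-k)) := zpow_pos_of_pos w hw (by omega)
    have : w ^ k = (w ^ (-k))⁻¹ := by rw [← zpow_neg]; ring_nf
    rw [this] at h
    exact pos_not_inv h2 h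

lemma lt_zpow_of_lt (hw : pos w) {j k : ℤ} (h : j < k) : lt (w ^ j) (w ^ k) := by
  have : (w ^ j)⁻¹ * w ^ k = w ^ (k - j) := by
    rw [← zpow_neg, ← zpow_add]
    ring_nf
  rw [lt, this]
  exact zpow_pos_of_pos w hw (by omega)

lemma le_zpow_of_le (hw : pos w) {j k : ℤ} (h : j ≤ k) : le (w ^ j) (w ^ k) := by
  rcases eq_or_lt_of_le h with rfl | h'
  · exact Or.inl rfl
  · exact Or.inr (lt_zpow_of_lt w hw h')

lemma lt_zpow_lt (hw : pos w) {j k : ℤ} (h : lt (w ^ j) (w ^ k)) : j < k := by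
  by_contra h'
  exact not_lt_of_le (le_zpow_of_le w hw (by omega)) h

lemma w_zpow_inj (hw : pos w) {j k : ℤ} (h : w ^ j = w ^ k) : j = k := by
  by_contra h'
  rcases lt_or_gt_of_ne h' with h'' | h''
  · exact lt_irrefl _ (h ▸ lt_zpow_of_lt w hw h'')
  · exact lt_irrefl _ (h ▸ lt_zpow_of_lt w hw h'')

lemma exists_floor (hw : pos w) (hwc : ∀ y : E c, w * y = y * w)
    {n : ℕ} (hn1 : 1 ≤ n) (hwn : w ^ n = z c) (h : E c) :
    ∃ k : ℤ, le (w ^ k) h ∧ lt h (w ^ (k + 1)) := by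
  classical
  set K : ℤ := (h.a.natAbs : ℤ) + 2 with hK
  have hzK : ∀ L : ℤ, w ^ ((n : ℤ) * L) = (z c) ^ L := by
    intro L
    rw [zpow_mul, zpow_natCast, hwn]
  have hupper : lt h (w ^ ((n : ℤ) * K)) := by
    rw [hzK, lt]
    left
    rw [z_zpow]
    have hF := F_le_one (c := c) h.x h.x⁻¹
    simp only [mul_a, inv_a, mul_x, inv_x]
    have : c.F h.x⁻¹ (1 : Γ) = 0 := c.hr _
    rw [this]
    omega
  have hlower : ¬ lt h (w ^ (-((n : ℤ) * K))) := by
    rw [← mul_neg, hzK]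
    intro hcon
    have hpos2 : pos ((z c) ^ K * h) := by
      left
      rw [z_zpow]
      simp only [mul_a, mul_x]
      have : c.F (1 : Γ) h.x = 0 := c.hl _
      rw [this]
      omega
    have heq : ((z c) ^ K * h)⁻¹ = h⁻¹ * (z c) ^ (-K) := by
      rw [mul_inv_rev, zpow_neg]
    have hcon' : pos (h⁻¹ * (z c) ^ (-K)) := hcon
    rw [← heq] at hcon'
    exact pos_not_inv hpos2 hcon' 
  set S : ℤ → Prop := fun k => lt h (w ^ k) with hS
  have hmono : ∀ k k' : ℤ, S k → k ≤ k' → S k' := by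
    intro k k' hk hkk
    rcases eq_or_lt_of_le hkk with rfl | h'
    · exact hk
    · exact lt_trans hk (lt_zpow_of_lt w hw h')
  have hbdd : ∃ b : ℤ, ∀ k, S k → b ≤ k := by
    refine ⟨-((n : ℤ) * K) + 1, fun k hk => ?_⟩
    by_contra hc
    exact hlower (hmono k _ hk (by omega))
  have hinh : ∃ k, S k := ⟨(n : ℤ) * K, hupper⟩
  obtain ⟨lb, hlb, hleast⟩ := Int.exists_least_of_bdd hbdd hinh
  refine ⟨lb - 1, ?_, by simpa using hlb⟩
  apply le_of_not_lt
  intro hcon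
  have := hleast _ hcon
  omega

lemma floor_unique (hw : pos w) {h : E c} {k k' : ℤ}
    (h1 : le (w ^ k) h ∧ lt h (w ^ (k + 1)))
    (h2 : le (w ^ k') h ∧ lt h (w ^ (k' + 1))) : k = k' := by
  by_contra hne
  rcases lt_or_gt_of_ne hne with hlt | hlt
  · exact not_lt_of_le h2.1 (lt_le_trans h1.2 (le_zpow_of_le w hw (by omega)))
  · exact not_lt_of_le h1.1 (lt_le_trans h2.2 (le_zpow_of_le w hw (by omega)))

end Wgeneric

end Tsec
end E

open E

variable {Γ : Type*} [Group Γ] {c : CO Γ}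

lemma prod_bound {w : E c} (hw : pos w) (hwc : ∀ y : E c, w * y = y * w)
    {a b : E c} (ha1 : le 1 a) (ha2 : lt a w) (hb1 : le 1 b) (hb2 : lt b w) :
    le 1 (a * b) ∧ lt (a * b) (w ^ (2 : ℤ)) := by
  constructor
  · refine E.le_trans ha1 ?_
    have := le_mul_left a hb1
    rwa [mul_one] at this
  · have h1 : lt (a * b) (a * w) := lt_mul_left a hb2
    rw [← hwc a] at h1
    have h2 : lt (w * a) (w * w) := lt_mul_left w ha2
    have h3 : w * w = w ^ (2 : ℤ) := by
      rw [show (2 : ℤ) = 1 + 1 by norm_num, zpow_add, zpow_one]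
    rw [h3] at h2
    exact E.lt_trans h1 h2

theorem forward {G : Type*} [Group G] (n : ℕ) (hn : 2 ≤ n)
    (hco : CircularlyOrderable (G × Multiplicative (ZMod n))) :
    ∃ f : G → G → ℤ, IsCircularOrdering f ∧
      ∃ (u : G → G → ℤ) (d : G → ℤ),
        (∀ g : G, u 1 g = 0 ∧ u g 1 = 0) ∧
        (∀ g h k : G, u h k - u (g * h) k + u g (h * k) - u g h = 0) ∧
        (∀ g h : G, f g h = n * u g h + d g + d h - d (g * h)) := by
  haveI : NeZero n := ⟨by omega⟩
  obtain ⟨F, hF1, hF2, hF3, hF4⟩ := hco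
  let c : CO (G × Multiplicative (ZMod n)) :=
    ⟨F, hF1, fun g => (hF2 g).1, fun g => (hF2 g).2, hF3, hF4⟩
  set t : G × Multiplicative (ZMod n) := (1, Multiplicative.ofAdd (1 : ZMod n)) with ht
  -- basic facts about t
  have htc : ∀ x, t * x = x * t := by
    intro x
    ext
    · simp [ht]
    · simp [ht, mul_comm]
  have htj : ∀ j : ℕ, t ^ j = (1, Multiplicative.ofAdd ((j : ZMod n) : ZMod n)) := by
    intro j
    ext
    · simp [ht]
    · show (t ^ j).2 = _
      rw [Prod.pow_snd, ht]
      show Multiplicative.ofAdd (1 : ZMod n) ^ j = _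
      rw [← ofAdd_nsmul, nsmul_one]
      rfl
  have htn : t ^ n = 1 := by
    rw [htj n]
    have h0 : ((n : ZMod n)) = 0 := ZMod.natCast_self n
    rw [h0]
    rfl
  have hto : ∀ j : ℕ, 0 < j → j < n → t ^ j ≠ 1 := by
    intro j hj1 hj2 hcon
    rw [htj j] at hcon
    have h2 : Multiplicative.ofAdd ((j : ZMod n)) = (1 : Multiplicative (ZMod n)) :=
      congrArg Prod.snd hcon
    have h3 : (j : ZMod n) = 0 := by
      have := congrArg Multiplicative.toAdd h2
      simpa using this
    have h4 : (j : ZMod n).val = j := ZMod.val_cast_of_lt hj2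
    rw [h3] at h4
    simp [ZMod.val_zero] at h4
    omega
  -- the root w
  set w : E c := wdef c t n with hw
  have hwpos : pos w := w_pos c t n htc hn htn hto
  have hwc : ∀ y : E c, w * y = y * w := w_central c t n htc hn htn
  have hwn : w ^ n = z c := w_pow_n c t n htc hn htn hto
  have hwnz : w ^ (n : ℤ) = z c := by rw [zpow_natCast, hwn]
  -- T and z as powers of w
  have hbez := Int.gcd_eq_gcd_ab (n : ℤ) (mdef c t n)
  rw [gcd_eq_one c t n htc hn htn hto] at hbez
  set α := Int.gcdA (n : ℤ) (mdef c t n) with hα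
  set β := Int.gcdB (n : ℤ) (mdef c t n) with hβ
  set m := mdef c t n with hm
  have hzc : ∀ y : E c, Commute (z c) y := fun y => z_central y
  have hTw : (T c t) = w ^ m := by
    have hcomm : Commute ((z c) ^ α) ((T c t) ^ β) :=
      ((hzc (T c t)).zpow_left α).zpow_right β
    rw [hw, wdef, hcomm.mul_zpow]
    have h1 : ((z c) ^ α) ^ m = (z c) ^ (α * m) := (zpow_mul _ _ _).symm
    have h2 : ((T c t) ^ β) ^ m = (T c t) ^ (β * m) := (zpow_mul _ _ _).symm
    rw [h1, h2]
    have h3 : β * m = 1 - (n : ℤ) * α := by push_cast at hbez; linarith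
    rw [h3, zpow_sub, zpow_one]
    have h6 : (T c t) ^ ((n : ℤ) * α) = (z c) ^ (m * α) := by
      rw [zpow_mul, zpow_natCast, T_pow_n c t n htn, ← hm, ← zpow_mul]
    have h7 : (z c) ^ (α * m) * ((T c t) * ((z c) ^ (m * α))⁻¹) =
        (T c t) * ((z c) ^ (α * m) * ((z c) ^ (m * α))⁻¹) := by
      rw [← mul_assoc, ((hzc (T c t)).zpow_left (α * m)).eq, mul_assoc]
    rw [h6, h7, ← zpow_neg, ← zpow_add]
    have h5 : α * m + -(m * α) = 0 := by ring
    rw [h5, zpow_zero, mul_one]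
  -- projection to G
  let p1 : E c →* G := ⟨⟨fun e => (e.x).1, rfl⟩, fun e f => rfl⟩
  have hp1w : p1 w = 1 := by
    have hsplit : p1 w = (p1 (z c)) ^ α * (p1 (T c t)) ^ β := by
      rw [hw, wdef, map_mul, map_zpow, map_zpow]
    rw [hsplit]
    have hz1 : p1 (z c) = 1 := rfl
    have ht1 : p1 (T c t) = 1 := rfl
    rw [hz1, ht1, one_zpow, one_zpow, one_mul]
  -- kernel of p1 is generated by w
  have hker : ∀ y : E c, (y.x).1 = 1 → ∃ k : ℤ, y = w ^ k := by
    intro y hy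
    set j : ℕ := (Multiplicative.toAdd (y.x).2).val with hj
    have hyx : y.x = t ^ j := by
      rw [htj j]
      ext
      · exact hy
      · show (y.x).2 = Multiplicative.ofAdd ((j : ZMod n))
        rw [hj]
        have hv : ((Multiplicative.toAdd (y.x).2).val : ZMod n) =
            Multiplicative.toAdd (y.x).2 := ZMod.natCast_rightInverse _
        rw [hv]
        rfl
    have hyT : y = (T c t) ^ j * (z c) ^ (y.a - ((T c t) ^ j).a) := by
      rw [z_zpow]
      refine E.ext ?_ ?_
      · show (y.x) = ((T c t) ^ j).x * 1
        rw [mul_one, pow_x, hyx]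
        rfl
      · show y.a = ((T c t) ^ j).a + (y.a - ((T c t) ^ j).a) + c.F _ _
        rw [c.hr]
        ring
    refine ⟨m * j + (n : ℤ) * (y.a - ((T c t) ^ j).a), ?_⟩
    rw [zpow_add, zpow_mul, zpow_mul, ← hTw, hwnz, zpow_natCast]
    exact hyT
  -- fundamental-domain section
  have hn1 : 1 ≤ n := by omega
  have hfl : ∀ g : G, ∃ k : ℤ,
      le (w ^ k) (⟨(g, 1), 0⟩ : E c) ∧ lt (⟨(g, 1), 0⟩ : E c) (w ^ (k + 1)) :=
    fun g => exists_floor w hwpos hwc hn1 hwn _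
  choose dd hdd using hfl
  set s : G → E c := fun g => w ^ (-(dd g)) * ⟨(g, 1), 0⟩ with hs
  have hwcomm : ∀ y : E c, Commute w y := fun y => hwc y
  have hwck : ∀ (k : ℤ) (y : E c), w ^ k * y = y * w ^ k :=
    fun k y => ((hwcomm y).zpow_left k).eq
  have hs1 : ∀ g, le 1 (s g) := by
    intro g
    have h := le_mul_left (w ^ (-(dd g))) (hdd g).1
    have e1 : (w ^ (-(dd g))) * w ^ (dd g) = 1 := by
      rw [← zpow_add]
      simp
    rwa [e1] at h
  have hs2 : ∀ g, lt (s g) w := by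
    intro g
    have h := lt_mul_left (w ^ (-(dd g))) (hdd g).2
    have e1 : (w ^ (-(dd g))) * w ^ (dd g + 1) = w := by
      rw [← zpow_add]
      norm_num
    rwa [e1] at h
  have hp1s : ∀ g, p1 (s g) = g := by
    intro g
    rw [hs]
    show p1 (w ^ (-(dd g)) * ⟨(g, 1), 0⟩) = g
    rw [map_mul, map_zpow, hp1w, one_zpow, one_mul]
    rfl
  have hgs : ∀ g : G, (⟨(g, 1), 0⟩ : E c) = w ^ (dd g) * s g := by
    intro g
    rw [hs]
    show _ = w ^ (dd g) * (w ^ (-(dd g)) * _)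
    rw [← mul_assoc, ← zpow_add]
    simp
  -- the circular ordering on G
  have hfex : ∀ g h : G, ∃ k : ℤ, s g * s h = w ^ k * s (g * h) := by
    intro g h
    have hx1 : (((s g * s h) * (s (g * h))⁻¹).x).1 = 1 := by
      show p1 ((s g * s h) * (s (g * h))⁻¹) = 1
      rw [map_mul, map_mul, map_inv, hp1s, hp1s, hp1s, mul_inv_cancel]
    obtain ⟨k, hk⟩ := hker _ hx1
    refine ⟨k, ?_⟩
    rw [← hk]
    group
  choose fstar hstar using hfex
  have hbound : ∀ g h : G, le 1 (s g * s h) ∧ lt (s g * s h) (w ^ (2 : ℤ)) :=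
    fun g h => prod_bound hwpos hwc (hs1 g) (hs2 g) (hs1 h) (hs2 h)
  have hfub : ∀ g h : G, fstar g h < 2 := by
    intro g h
    have h1 : le (w ^ (fstar g h)) (s g * s h) := by
      rw [hstar g h]
      have h0 := le_mul_left (w ^ (fstar g h)) (hs1 (g * h))
      rwa [mul_one] at h0
    exact lt_zpow_lt w hwpos (le_lt_trans h1 (hbound g h).2)
  have hfprod : ∀ g h : G, lt (s g * s h) (w ^ (fstar g h + 1)) := by
    intro g h
    rw [hstar g h]
    have h0 := lt_mul_left (w ^ (fstar g h)) (hs2 (g * h))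
    rwa [← zpow_add_one] at h0
  have hf01 : ∀ g h : G, fstar g h = 0 ∨ fstar g h = 1 := by
    intro g h
    have h3 := hfub g h
    have h5 : lt (w ^ (0 : ℤ)) (w ^ (fstar g h + 1)) := by
      refine le_lt_trans ?_ (hfprod g h)
      simpa using (hbound g h).1
    have h6 := lt_zpow_lt w hwpos h5
    omega
  have hone : (⟨((1 : G), (1 : Multiplicative (ZMod n))), 0⟩ : E c) = 1 := rfl
  have hdd1 : dd 1 = 0 := by
    refine floor_unique w hwpos (hdd 1) ⟨?_, ?_⟩
    · rw [zpow_zero, hone]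
      exact Or.inl rfl
    · rw [hone, zero_add, zpow_one]
      exact lt_one_iff_pos.mpr hwpos
  have hs1e : s 1 = 1 := by
    rw [hs]
    show w ^ (-(dd 1)) * _ = 1
    rw [hdd1, hone]
    simp
  have hfl1 : ∀ g, fstar 1 g = 0 := by
    intro g
    have h := hstar 1 g
    rw [hs1e, one_mul, one_mul] at h
    have h2 : w ^ (fstar 1 g) * s g = w ^ (0 : ℤ) * s g := by
      rw [zpow_zero, one_mul]
      exact h.symm
    exact w_zpow_inj w hwpos (mul_right_cancel h2)
  have hfr1 : ∀ g, fstar g 1 = 0 := by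
    intro g
    have h := hstar g 1
    rw [hs1e, mul_one, mul_one] at h
    have h2 : w ^ (fstar g 1) * s g = w ^ (0 : ℤ) * s g := by
      rw [zpow_zero, one_mul]
      exact h.symm
    exact w_zpow_inj w hwpos (mul_right_cancel h2)
  have hspos : ∀ g : G, g ≠ 1 → pos (s g) := by
    intro g hg
    rcases hs1 g with he | hlt
    · exfalso
      apply hg
      have := hp1s g
      rw [← he] at this
      simpa using this.symm
    · exact lt_one_iff_pos.mp hlt
  have hfinv : ∀ g : G, g ≠ 1 → fstar g g⁻¹ = 1 := by
    intro g hg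
    have h := hstar g g⁻¹
    rw [mul_inv_cancel, hs1e, mul_one] at h
    have hpp : pos (s g * s g⁻¹) := pos_mul (hspos g hg) (hspos g⁻¹ (by simpa using hg))
    rw [h] at hpp
    have h1 : 1 ≤ fstar g g⁻¹ := by
      by_contra hcon
      exact not_pos_zpow_of_nonpos w hwpos (by omega) hpp
    have h2 : lt (w ^ (fstar g g⁻¹)) (w ^ (2 : ℤ)) := by
      rw [← h]
      exact (hbound g g⁻¹).2
    have h3 := lt_zpow_lt w hwpos h2
    omega
  have hrearr : ∀ (k l : ℤ) (a b : E c), (w ^ k * a) * (w ^ l * b) = w ^ (k + l) * (a * b) := by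
    intro k l a b
    rw [mul_assoc, ← mul_assoc a, ← hwck l a, mul_assoc, ← mul_assoc, ← zpow_add]
  have hfcoc : ∀ g h k : G,
      fstar h k - fstar (g * h) k + fstar g (h * k) - fstar g h = 0 := by
    intro g h k
    have e1 : (s g * s h) * s k = w ^ (fstar g h + fstar (g * h) k) * s (g * h * k) := by
      rw [hstar g h, mul_assoc, hstar (g * h) k, ← mul_assoc, ← zpow_add]
    have e2 : s g * (s h * s k) = w ^ (fstar h k + fstar g (h * k)) * s (g * h * k) := by
      have hidx : g * (h * k) = g * h * k := (mul_assoc g h k).symm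
      rw [hstar h k, ← mul_assoc, ← hwck (fstar h k) (s g), mul_assoc, hstar g (h * k),
        ← mul_assoc, ← zpow_add, hidx]
    have e3 := mul_assoc (s g) (s h) (s k)
    rw [e1, e2] at e3
    have e4 := w_zpow_inj w hwpos (mul_right_cancel e3)
    omega
  -- divisibility data
  set u : G → G → ℤ := fun g h => c.F (g, 1) (h, 1) with hu
  have hghat : ∀ g h : G,
      (⟨(g, 1), 0⟩ : E c) * ⟨(h, 1), 0⟩ = (z c) ^ (u g h) * ⟨(g * h, 1), 0⟩ := by
    intro g h
    rw [z_zpow]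
    refine E.ext ?_ ?_
    · show ((g, 1) : G × Multiplicative (ZMod n)) * (h, 1) = 1 * (g * h, 1)
      rw [one_mul]
      ext
      · rfl
      · show (1 : Multiplicative (ZMod n)) * 1 = 1
        rw [one_mul]
    · show (0 : ℤ) + 0 + c.F (g, 1) (h, 1) = u g h + 0 + c.F 1 (g * h, 1)
      rw [c.hl, hu]
      ring
  have hmain : ∀ g h : G, dd g + dd h + fstar g h = (n : ℤ) * u g h + dd (g * h) := by
    intro g h
    have lhs : (⟨(g, 1), 0⟩ : E c) * ⟨(h, 1), 0⟩ =
        w ^ (dd g + dd h + fstar g h) * s (g * h) := by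
      rw [hgs g, hgs h, hrearr, hstar g h, ← mul_assoc, ← zpow_add]
    have rhs : (⟨(g, 1), 0⟩ : E c) * ⟨(h, 1), 0⟩ =
        w ^ ((n : ℤ) * u g h + dd (g * h)) * s (g * h) := by
      rw [hghat g h, hgs (g * h), ← hwnz, ← zpow_mul, ← mul_assoc, ← zpow_add]
    rw [lhs] at rhs
    exact w_zpow_inj w hwpos (mul_right_cancel rhs)
  -- assemble
  refine ⟨fstar, ⟨hf01, fun g => ⟨hfl1 g, hfr1 g⟩, hfinv, hfcoc⟩,
    u, fun g => -(dd g), ?_, ?_, ?_⟩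
  · intro g
    constructor
    · show c.F ((1 : G), 1) (g, 1) = 0
      exact c.hl _
    · show c.F (g, 1) ((1 : G), 1) = 0
      exact c.hr _
  · intro g h k
    have e1 := hmain h k
    have e2 := hmain (g * h) k
    have e3 := hmain g (h * k)
    have e4 := hmain g h
    have hidx : g * (h * k) = g * h * k := (mul_assoc g h k).symm
    rw [hidx] at e3
    have hc := hfcoc g h k
    have hz : (n : ℤ) * (u h k - u (g * h) k + u g (h * k) - u g h) = 0 := by
      have expand : (n : ℤ) * (u h k - u (g * h) k + u g (h * k) - u g h) =
          (n : ℤ) * u h k - (n : ℤ) * u (g * h) k + (n : ℤ) * u g (h * k) -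
            (n : ℤ) * u g h := by ring
      rw [expand]
      omega
    have hn0 : (n : ℤ) ≠ 0 := by exact_mod_cast (by omega : n ≠ 0)
    rcases mul_eq_zero.mp hz with h' | h'
    · exact absurd h' hn0
    · exact h'
  · intro g h
    have := hmain g h
    dsimp only
    omega


lemma eq_of_dvd_bounds {n N : ℤ} (hn : 0 < n) (h1 : 0 < N) (h2 : N < 2 * n)
    (hd : n ∣ N) : N = n := by
  obtain ⟨k, rfl⟩ := hd
  have hk1 : 1 ≤ k := by nlinarith
  have hk2 : k ≤ 1 := by nlinarith
  have : k = 1 := le_antisymm hk2 hk1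
  rw [this, mul_one]

theorem backward {G : Type*} [Group G] (n : ℕ) (hn : 2 ≤ n)
    (f u : G → G → ℤ) (d : G → ℤ)
    (hf : IsCircularOrdering f)
    (hu1 : ∀ g : G, u 1 g = 0 ∧ u g 1 = 0)
    (hu2 : ∀ g h k : G, u h k - u (g * h) k + u g (h * k) - u g h = 0)
    (hrel : ∀ g h : G, f g h = n * u g h + d g + d h - d (g * h)) :
    CircularlyOrderable (G × Multiplicative (ZMod n)) := by
  haveI : NeZero n := ⟨by omega⟩
  obtain ⟨hf1, hf2, hf3, hf4⟩ := hf
  have hnpos : (0 : ℤ) < (n : ℤ) := by exact_mod_cast (by omega : 0 < n)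
  have hn0 : (n : ℤ) ≠ 0 := by omega
  have hd1 : d 1 = 0 := by
    have h := hrel 1 1
    rw [(hf2 1).1, (hu1 1).1, mul_one] at h
    omega
  set A : G × Multiplicative (ZMod n) → ℤ :=
    fun x => (((Multiplicative.toAdd x.2).val : ℤ) - d x.1) % (n : ℤ) with hA
  set F : (G × Multiplicative (ZMod n)) → (G × Multiplicative (ZMod n)) → ℤ :=
    fun x y => (A x + A y + f x.1 y.1) / (n : ℤ) with hF
  have hA0 : ∀ x, 0 ≤ A x := fun x => Int.emod_nonneg _ hn0
  have hA1 : ∀ x, A x < n := fun x => Int.emod_lt_of_pos _ hnpos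
  have hf0 : ∀ g h : G, 0 ≤ f g h := by
    intro g h; rcases hf1 g h with h' | h' <;> omega
  have hfle : ∀ g h : G, f g h ≤ 1 := by
    intro g h; rcases hf1 g h with h' | h' <;> omega
  have hmod : ∀ a : ℤ, a % (n : ℤ) ≡ a [ZMOD (n : ℤ)] :=
    fun a => Int.emod_emod_of_dvd a dvd_rfl
  have hval : ∀ x y : Multiplicative (ZMod n),
      ((Multiplicative.toAdd (x * y)).val : ℤ) ≡
        ((Multiplicative.toAdd x).val : ℤ) + ((Multiplicative.toAdd y).val : ℤ)
        [ZMOD (n : ℤ)] := by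
    intro x y
    have h1 : Multiplicative.toAdd (x * y) = Multiplicative.toAdd x + Multiplicative.toAdd y :=
      rfl
    rw [h1, ZMod.val_add]
    push_cast
    exact hmod _
  have hAmul : ∀ x y : G × Multiplicative (ZMod n),
      (A x + A y + f x.1 y.1) % (n : ℤ) = A (x * y) := by
    intro x y
    have c1 : A x + A y + f x.1 y.1 ≡
        (((Multiplicative.toAdd x.2).val : ℤ) - d x.1) +
        (((Multiplicative.toAdd y.2).val : ℤ) - d y.1) + f x.1 y.1 [ZMOD (n : ℤ)] :=
      ((hmod _).add (hmod _)).add_right _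
    have c2 : (((Multiplicative.toAdd x.2).val : ℤ) - d x.1) +
        (((Multiplicative.toAdd y.2).val : ℤ) - d y.1) + f x.1 y.1 =
        (((Multiplicative.toAdd x.2).val : ℤ) + ((Multiplicative.toAdd y.2).val : ℤ)
          - d (x.1 * y.1)) + (n : ℤ) * u x.1 y.1 := by
      rw [hrel x.1 y.1]; ring
    have c3 : (((Multiplicative.toAdd x.2).val : ℤ) + ((Multiplicative.toAdd y.2).val : ℤ)
          - d (x.1 * y.1)) + (n : ℤ) * u x.1 y.1 ≡
        ((Multiplicative.toAdd x.2).val : ℤ) + ((Multiplicative.toAdd y.2).val : ℤ)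
          - d (x.1 * y.1) [ZMOD (n : ℤ)] :=
      Int.ModEq.symm (Int.modEq_iff_dvd.mpr ⟨u x.1 y.1, by ring⟩)
    have c4 : ((Multiplicative.toAdd x.2).val : ℤ) + ((Multiplicative.toAdd y.2).val : ℤ)
          - d (x.1 * y.1) ≡
        ((Multiplicative.toAdd ((x * y).2)).val : ℤ) - d ((x * y).1) [ZMOD (n : ℤ)] := by
      have h5 : (x * y).1 = x.1 * y.1 := rfl
      have h6 : (x * y).2 = x.2 * y.2 := rfl
      rw [h5, h6]
      exact ((hval x.2 y.2).symm).sub_right _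
    have c5 : ((Multiplicative.toAdd ((x * y).2)).val : ℤ) - d ((x * y).1) ≡
        A (x * y) [ZMOD (n : ℤ)] := (hmod _).symm
    have call := ((c1.trans (c2 ▸ c3)).trans c4).trans c5
    have : A (x * y) % (n : ℤ) = A (x * y) :=
      Int.emod_emod_of_dvd _ dvd_rfl ▸ Int.emod_eq_of_lt (hA0 _) (hA1 _)
    rw [Int.ModEq] at call
    rw [call, this]
  have hstar : ∀ x y : G × Multiplicative (ZMod n),
      A x + A y + f x.1 y.1 = (n : ℤ) * F x y + A (x * y) := by
    intro x y
    rw [← hAmul x y, hF]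
    exact (Int.mul_ediv_add_emod _ _).symm
  refine ⟨F, ?_, ?_, ?_, ?_⟩
  · -- values in {0,1}
    intro x y
    have hb0 : 0 ≤ A x + A y + f x.1 y.1 := by
      have := hA0 x; have := hA0 y; have := hf0 x.1 y.1; omega
    have hb1 : A x + A y + f x.1 y.1 < 2 * (n : ℤ) := by
      have := hA1 x; have := hA1 y; have := hfle x.1 y.1; omega
    rcases lt_or_ge (A x + A y + f x.1 y.1) (n : ℤ) with hlt | hge
    · left
      rw [hF]
      exact Int.ediv_eq_zero_of_lt hb0 hlt
    · right
      rw [hF]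
      show (A x + A y + f x.1 y.1) / (n : ℤ) = 1
      have hsplit : A x + A y + f x.1 y.1 = (A x + A y + f x.1 y.1 - n) + 1 * (n : ℤ) := by
        ring
      rw [hsplit, Int.add_mul_ediv_right _ _ hn0,
        Int.ediv_eq_zero_of_lt (by omega) (by omega)]
      norm_num
  · -- normalization
    intro x
    have hA1' : A 1 = 0 := by
      rw [hA]
      show (((Multiplicative.toAdd (1 : Multiplicative (ZMod n))).val : ℤ) - d 1) % (n : ℤ) = 0
      have : Multiplicative.toAdd (1 : Multiplicative (ZMod n)) = 0 := rfl
      rw [this, ZMod.val_zero, hd1]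
      simp
    constructor
    · show (A 1 + A x + f (1 : G) x.1) / (n : ℤ) = 0
      rw [hA1', (hf2 x.1).1]
      exact Int.ediv_eq_zero_of_lt (by have := hA0 x; omega) (by have := hA1 x; omega)
    · show (A x + A 1 + f x.1 (1 : G)) / (n : ℤ) = 0
      rw [hA1', (hf2 x.1).2]
      exact Int.ediv_eq_zero_of_lt (by have := hA0 x; omega) (by have := hA1 x; omega)
  · -- inverses
    intro x hx
    have hA1' : A 1 = 0 := by
      show (((Multiplicative.toAdd (1 : Multiplicative (ZMod n))).val : ℤ) - d 1) % (n : ℤ) = 0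
      have : Multiplicative.toAdd (1 : Multiplicative (ZMod n)) = 0 := rfl
      rw [this, ZMod.val_zero, hd1]
      simp
    set N := A x + A x⁻¹ + f x.1 (x⁻¹).1 with hN
    have hdvd : (n : ℤ) ∣ N := by
      have := hAmul x x⁻¹
      rw [mul_inv_cancel, hA1'] at this
      exact Int.dvd_of_emod_eq_zero this
    have hb1 : N < 2 * (n : ℤ) := by
      have := hA1 x; have := hA1 x⁻¹; have := hfle x.1 (x⁻¹).1; omega
    have hb0 : 0 < N := by
      by_cases hg : x.1 = 1
      · -- second coordinate is nontrivial
        have hx2 : x.2 ≠ 1 := by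
          intro h2
          apply hx
          have : x = (x.1, x.2) := rfl
          rw [this, hg, h2]
          rfl
        have hv : (Multiplicative.toAdd x.2).val ≠ 0 := by
          intro h0
          apply hx2
          have : Multiplicative.toAdd x.2 = 0 := by
            have := (ZMod.val_eq_zero _).mp h0
            exact this
          have h2 := congrArg Multiplicative.ofAdd this
          simpa using h2
        have hAx : 1 ≤ A x := by
          rw [hA]
          show 1 ≤ (((Multiplicative.toAdd x.2).val : ℤ) - d x.1) % (n : ℤ)
          rw [hg, hd1, sub_zero]
          have hlt : ((Multiplicative.toAdd x.2).val : ℤ) < (n : ℤ) := by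
            exact_mod_cast ZMod.val_lt _
          rw [Int.emod_eq_of_lt (by positivity) hlt]
          omega
        have := hA0 x⁻¹; have := hf0 x.1 (x⁻¹).1
        omega
      · have hfx : f x.1 (x⁻¹).1 = 1 := by
          have : (x⁻¹).1 = (x.1)⁻¹ := rfl
          rw [this]
          exact hf3 x.1 hg
        have := hA0 x; have := hA0 x⁻¹
        omega
    have hNn : N = (n : ℤ) := eq_of_dvd_bounds hnpos hb0 hb1 hdvd
    show (A x + A x⁻¹ + f x.1 (x⁻¹).1) / (n : ℤ) = 1
    rw [← hN, hNn]
    exact Int.ediv_self hn0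
  · -- cocycle identity
    intro x y zz
    have e1 := hstar y zz
    have e2 := hstar (x * y) zz
    have e3 := hstar x (y * zz)
    have e4 := hstar x y
    have hfc := hf4 x.1 y.1 zz.1
    have hxy1 : (x * y).1 = x.1 * y.1 := rfl
    have hyz1 : (y * zz).1 = y.1 * zz.1 := rfl
    rw [hxy1] at e2
    rw [hyz1] at e3
    have hassoc : x * y * zz = x * (y * zz) := mul_assoc _ _ _
    rw [hassoc] at e2
    have hgoal : (n : ℤ) * F y zz - (n : ℤ) * F (x * y) zz + (n : ℤ) * F x (y * zz)
        - (n : ℤ) * F x y = 0 := by omega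
    have hexp : (n : ℤ) * (F y zz - F (x * y) zz + F x (y * zz) - F x y) = 0 := by
      linear_combination hgoal
    rcases mul_eq_zero.mp hexp with h' | h'
    · exact absurd h' hn0
    · exact h'

end CircAux

/-- `G × ℤ/nℤ` is circularly-orderable if and only if `G` admits a circular ordering `f`
whose class in `H²(G;ℤ)` is `n`-divisible, i.e. `f = n·u + δd` for some normalized
integral 2-cocycle `u` and some function `d : G → ℤ`. -/
theorem product_circularlyOrderable_iff_n_divisible {G : Type*} [Group G]
    (n : ℕ) (hn : 2 ≤ n) :
    CircularlyOrderable (G × Multiplicative (ZMod n)) ↔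
      ∃ f : G → G → ℤ, IsCircularOrdering f ∧
        ∃ (u : G → G → ℤ) (d : G → ℤ),
          (∀ g : G, u 1 g = 0 ∧ u g 1 = 0) ∧
          (∀ g h k : G, u h k - u (g * h) k + u g (h * k) - u g h = 0) ∧
          (∀ g h : G, f g h = n * u g h + d g + d h - d (g * h)) := by
  constructor
  · exact CircAux.forward n hn
  · rintro ⟨f, hf, u, d, h1, h2, h3⟩
    exact CircAux.backward n hn f u d hf h1 h2 h3
end

section
/- Let G be a circularly-orderable group such that the second group cohomology H²(G;ℤ) with trivial integer coefficients has finite exponent e ≥ 2. If n ≥ 2 and gcd(n,e) = 1, then G × ℤ/nℤ is circularly-orderable. -/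
/-- If `G` is circularly-orderable and `H²(G;ℤ)` (group cohomology with trivial integer
coefficients) has finite exponent `e ≥ 2`, then `G × ℤ/nℤ` is circularly-orderable for
every `n ≥ 2` with `gcd(n,e) = 1`. -/
theorem product_circularlyOrderable_of_coprime_exponent {G : Type} [Group G]
    (hco : CircularlyOrderable G) (e : ℕ) (he : 2 ≤ e)
    (hexp : AddMonoid.exponent (groupCohomology.H2 (Rep.trivial ℤ G ℤ)) = e)
    (n : ℕ) (hn : 2 ≤ n) (hgcd : Nat.gcd n e = 1) :
    CircularlyOrderable (G × Multiplicative (ZMod n)) := by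
  obtain ⟨f, hf01, hf1, hfinv, hfc⟩ := hco
  -- Step 1: get u with u h - u (g*h) + u g = e * f g h from the exponent hypothesis
  obtain ⟨u, hu⟩ : ∃ u : G → ℤ, ∀ g h : G, u h - u (g * h) + u g = (e : ℤ) * f g h := by
    have hmem : (fun p : G × G => f p.1 p.2) ∈ groupCohomology.cocycles₂ (Rep.trivial ℤ G ℤ) := by
      rw [groupCohomology.mem_cocycles₂_def]
      intro g h j
      simpa using hfc g h j
    set F : groupCohomology.cocycles₂ (Rep.trivial ℤ G ℤ) := ⟨_, hmem⟩ with hFdef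
    have hF : e • ((groupCohomology.H2π (Rep.trivial ℤ G ℤ)).hom F) = 0 := by
      rw [← hexp]; exact AddMonoid.exponent_nsmul_eq_zero _
    have hcob : ⇑((e : ℤ) • F) ∈ groupCohomology.coboundaries₂ (Rep.trivial ℤ G ℤ) := by
      have h0 : (groupCohomology.H2π (Rep.trivial ℤ G ℤ)).hom ((e : ℤ) • F) = 0 := by
        rw [map_zsmul, natCast_zsmul]
        exact hF
      exact (groupCohomology.H2π_eq_zero_iff _).1 h0
    obtain ⟨u, hu⟩ := hcob
    refine ⟨u, fun g h => ?_⟩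
    have := congrFun hu (g, h)
    simp [smul_eq_mul, groupCohomology.d₁₂_hom_apply, hFdef] at this
    exact this
  -- Step 2: Bezout
  obtain ⟨a, b, hbez⟩ : ∃ a b : ℤ, (1 : ℤ) = n * a + e * b := by
    refine ⟨Nat.gcdA n e, Nat.gcdB n e, ?_⟩
    have := Nat.gcd_eq_gcd_ab n e
    rw [hgcd] at this
    exact_mod_cast this
  -- Step 3: explicit construction
  haveI : NeZero n := ⟨by omega⟩
  set P := G × Multiplicative (ZMod n)
  -- β : G → ZMod n, with f g h ≡ β g + β h - β (g*h)
  set β : G → ZMod n := fun g => ((b * u g : ℤ) : ZMod n) with hβdef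
  have hn0 : ((n : ℤ) : ZMod n) = 0 := by push_cast; simp
  have key : ∀ g h : G, ((f g h : ℤ) : ZMod n) = β g + β h - β (g * h) := by
    intro g h
    have h1 : (b * ((e : ℤ) * f g h) - f g h) = (n : ℤ) * (-(a * f g h)) := by
      linear_combination (-(f g h)) * hbez
    have h2 : ((b * ((e : ℤ) * f g h) - f g h : ℤ) : ZMod n) = 0 := by
      rw [h1]; push_cast; simp
    have h3 := hu g h
    simp only [hβdef]
    push_cast at h2 ⊢
    have h4 : ((u h : ZMod n)) - (u (g * h) : ZMod n) + (u g : ZMod n)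
        = (e : ZMod n) * ((f g h : ℤ) : ZMod n) := by exact_mod_cast congrArg (Int.cast : ℤ → ZMod n) h3
    linear_combination -h2 - (b : ZMod n) * h4
  -- the "fractional part" function
  set R : P → ℤ := fun x => ((Multiplicative.toAdd x.2 - β x.1).val : ℤ) with hRdef
  have hR0 : ∀ x : P, 0 ≤ R x := fun x => Int.natCast_nonneg _
  have hR1 : ∀ x : P, R x < n := fun x => by
    have := ZMod.val_lt (Multiplicative.toAdd x.2 - β x.1)
    simp only [hRdef]
    exact_mod_cast this
  have hRcast : ∀ x : P, ((R x : ℤ) : ZMod n) = Multiplicative.toAdd x.2 - β x.1 := by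
    intro x; simp [hRdef, ZMod.natCast_val, ZMod.cast_id]
  have hfb : ∀ g h : G, 0 ≤ f g h ∧ f g h ≤ 1 := by
    intro g h; rcases hf01 g h with h' | h' <;> simp [h']
  have hdvd : ∀ x y : P, R x + R y + f x.1 y.1 - R (x * y) = 0 ∨
      R x + R y + f x.1 y.1 - R (x * y) = n := by
    intro x y
    have hc : ((R x + R y + f x.1 y.1 - R (x * y) : ℤ) : ZMod n) = 0 := by
      push_cast
      rw [hRcast x, hRcast y, hRcast (x * y), key x.1 y.1]
      have h2 : Multiplicative.toAdd (x * y).2 = Multiplicative.toAdd x.2 + Multiplicative.toAdd y.2 := rfl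
      have h1 : (x * y).1 = x.1 * y.1 := rfl
      rw [h1, h2]; ring
    obtain ⟨t, ht⟩ := (ZMod.intCast_zmod_eq_zero_iff_dvd _ n).1 hc
    have b1 := hR0 x; have b2 := hR0 y; have b3 := hR0 (x * y)
    have b4 := hR1 x; have b5 := hR1 y; have b6 := hR1 (x * y)
    obtain ⟨b7, b8⟩ := hfb x.1 y.1
    have hn2 : (2 : ℤ) ≤ n := by exact_mod_cast hn
    have htge : 0 ≤ t := by
      by_contra hlt
      push_neg at hlt
      have : (n : ℤ) * t ≤ n * (-1) := by
        apply mul_le_mul_of_nonneg_left (by omega) (by positivity)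
      linarith
    have htle : t ≤ 1 := by
      by_contra hlt
      push_neg at hlt
      have : (n : ℤ) * 2 ≤ n * t := by
        apply mul_le_mul_of_nonneg_left (by omega) (by positivity)
      linarith
    interval_cases t
    · left; linarith
    · right; linarith
  set F : P → P → ℤ := fun x y => if R x + R y + f x.1 y.1 = R (x * y) then 0 else 1 with hFdef
  have hstar : ∀ x y : P, R x + R y + f x.1 y.1 = R (x * y) + n * F x y := by
    intro x y
    rcases hdvd x y with h | h
    · rw [hFdef]; simp only []
      rw [if_pos (by linarith)]; linarith
    · rw [hFdef]; simp only []
      rw [if_neg (by intro hh; rw [hh] at h; simp at h; omega)]; linarith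
  have hF01 : ∀ x y : P, F x y = 0 ∨ F x y = 1 := by
    intro x y; rw [hFdef]; simp only []
    split <;> simp
  -- identity facts
  have hu1 : u 1 = 0 := by
    have := hu 1 1
    simp [(hf1 1).1] at this
    linarith [this]
  have hβ1 : β 1 = 0 := by simp [hβdef, hu1]
  have hRone : R (1 : P) = 0 := by
    have h2 : Multiplicative.toAdd (1 : P).2 = (0 : ZMod n) := rfl
    have h1 : (1 : P).1 = (1 : G) := rfl
    simp [hRdef, h1, h2, hβ1]
  refine ⟨F, hF01, ?_, ?_, ?_⟩
  · intro x
    constructor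
    · rw [hFdef]; simp only []
      rw [if_pos]; rw [one_mul]
      have h1 : ((1 : P).1) = (1 : G) := rfl
      rw [hRone, h1, (hf1 x.1).1]; ring
    · rw [hFdef]; simp only []
      rw [if_pos]; rw [mul_one]
      have h1 : ((1 : P).1) = (1 : G) := rfl
      rw [hRone, h1, (hf1 x.1).2]; ring
  · intro x hx
    rcases hF01 x x⁻¹ with h | h
    · exfalso
      have hs := hstar x x⁻¹
      rw [h, mul_inv_cancel, hRone] at hs
      have hinv : (x⁻¹).1 = x.1⁻¹ := rfl
      rw [hinv] at hs
      have b1 := hR0 x; have b2 := hR0 x⁻¹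
      obtain ⟨b3, _⟩ := hfb x.1 x.1⁻¹
      have hfz : f x.1 x.1⁻¹ = 0 := by linarith
      have hg1 : x.1 = 1 := by
        by_contra hg
        rw [hfinv x.1 hg] at hfz; omega
      have hRx : R x = 0 := by linarith
      have hval : (Multiplicative.toAdd x.2 - β x.1).val = 0 := by
        simp only [hRdef] at hRx
        exact_mod_cast hRx
      rw [hg1, hβ1, sub_zero] at hval
      have hx2 : Multiplicative.toAdd x.2 = 0 := (ZMod.val_eq_zero _).1 hval
      apply hx
      have : x.2 = (1 : Multiplicative (ZMod n)) := by
        have := congrArg Multiplicative.ofAdd hx2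
        simpa using this
      exact Prod.ext hg1 this
    · exact h
  · intro x y z
    have h1 := hstar x y
    have h2 := hstar (x * y) z
    have h3 := hstar y z
    have h4 := hstar x (y * z)
    have hc := hfc x.1 y.1 z.1
    have e1 : (x * y).1 = x.1 * y.1 := rfl
    have e2 : (y * z).1 = y.1 * z.1 := rfl
    rw [e1] at h2; rw [e2] at h4
    rw [← mul_assoc] at h4
    have hkey : (n : ℤ) * (F y z - F (x * y) z + F x (y * z) - F x y) = 0 := by ring_nf; linarith
    have hn' : (n : ℤ) ≠ 0 := by positivity
    rcases mul_eq_zero.1 hkey with h | h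
    · exact absurd h hn'
    · exact h
end

section
/- Let G be a circularly-orderable group that is not left-orderable, and suppose the second group cohomology H²(G;ℤ) with trivial integer coefficients has finite exponent e ≥ 2. Then G × ℤ/eℤ is not circularly-orderable. -/
/-- Data of a circular ordering, bundled so type-class instances can depend on it. -/
structure CircOrd (Γ : Type*) [Group Γ] where
  f : Γ → Γ → ℤ
  h01 : ∀ g h, f g h = 0 ∨ f g h = 1
  hone : ∀ g, f 1 g = 0 ∧ f g 1 = 0
  hinv : ∀ g, g ≠ 1 → f g g⁻¹ = 1
  hcoc : ∀ g h k, f h k - f (g * h) k + f g (h * k) - f g h = 0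

namespace CircOrd

variable {Γ : Type*} [Group Γ] (c : CircOrd Γ)

lemma nonneg (g h : Γ) : 0 ≤ c.f g h := by rcases c.h01 g h with h | h <;> omega
lemma le_one (g h : Γ) : c.f g h ≤ 1 := by rcases c.h01 g h with h | h <;> omega
lemma one_left (g : Γ) : c.f 1 g = 0 := (c.hone g).1
lemma one_right (g : Γ) : c.f g 1 = 0 := (c.hone g).2

lemma inv_symm (g : Γ) : c.f g⁻¹ g = c.f g g⁻¹ := by
  have := c.hcoc g g⁻¹ g
  simp only [mul_inv_cancel, inv_mul_cancel, c.one_left, c.one_right] at this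
  omega

lemma inv_left (g : Γ) (hg : g ≠ 1) : c.f g⁻¹ g = 1 := by
  rw [c.inv_symm]; exact c.hinv g hg

end CircOrd

/-- The central extension of `Γ` by `ℤ` determined by a circular ordering cocycle. -/
@[ext]
structure CE {Γ : Type*} [Group Γ] (c : CircOrd Γ) where
  g : Γ
  n : ℤ

namespace CE

variable {Γ : Type*} [Group Γ] {c : CircOrd Γ}

instance : Mul (CE c) := ⟨fun x y => ⟨x.g * y.g, x.n + y.n + c.f x.g y.g⟩⟩
instance : One (CE c) := ⟨⟨1, 0⟩⟩
instance : Inv (CE c) := ⟨fun x => ⟨x.g⁻¹, -x.n - c.f x.g x.g⁻¹⟩⟩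

@[simp] lemma mul_g (x y : CE c) : (x * y).g = x.g * y.g := rfl
@[simp] lemma mul_n (x y : CE c) : (x * y).n = x.n + y.n + c.f x.g y.g := rfl
@[simp] lemma one_g : (1 : CE c).g = 1 := rfl
@[simp] lemma one_n : (1 : CE c).n = 0 := rfl
@[simp] lemma inv_g (x : CE c) : (x⁻¹).g = x.g⁻¹ := rfl
@[simp] lemma inv_n (x : CE c) : (x⁻¹).n = -x.n - c.f x.g x.g⁻¹ := rfl

instance : Group (CE c) :=
  Group.ofLeftAxioms
    (fun x y z => by
      ext
      · simp [mul_assoc]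
      · have := c.hcoc x.g y.g z.g
        simp only [mul_g, mul_n, mul_assoc]
        omega)
    (fun x => by ext <;> simp [c.one_left])
    (fun x => by
      ext
      · simp
      · simp [c.inv_symm]; omega)

end CE

namespace CE

variable {Γ : Type*} [Group Γ] {c : CircOrd Γ}

/-- Projection to `Γ` as a monoid hom. -/
def proj : CE c →* Γ := { toFun := CE.g, map_one' := rfl, map_mul' := fun _ _ => rfl }

@[simp] lemma pow_g (x : CE c) (k : ℕ) : (x ^ k).g = x.g ^ k := by
  induction k with
  | zero => simp
  | succ k ih => simp [pow_succ, ih]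

lemma pow_n (x : CE c) (k : ℕ) :
    (x ^ k).n = k * x.n + ∑ j ∈ Finset.range k, c.f (x.g ^ j) x.g := by
  induction k with
  | zero => simp
  | succ k ih =>
      rw [pow_succ, mul_n, ih, Finset.sum_range_succ, pow_g]
      push_cast; ring

/-- The central element generating the kernel. -/
def t : CE c := ⟨1, 1⟩

lemma t_comm (x : CE c) : Commute (t : CE c) x := by
  unfold Commute SemiconjBy
  ext
  · simp [t]
  · simp [t, c.one_left, c.one_right]; omega

@[simp] lemma t_pow (k : ℕ) : (t : CE c) ^ k = ⟨1, k⟩ := by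
  induction k with
  | zero => rfl
  | succ k ih =>
      rw [pow_succ, ih]
      ext <;> simp [t, c.one_left, c.one_right]

@[simp] lemma t_zpow (k : ℤ) : (t : CE c) ^ k = ⟨1, k⟩ := by
  cases k with
  | ofNat k => simpa using t_pow k
  | negSucc k =>
      rw [zpow_negSucc, t_pow]
      ext <;> simp [c.one_right, c.one_left, Int.negSucc_eq]

/-- `CE c` is torsion-free. -/
lemma torsion_free (x : CE c) (k : ℕ) (hk : 0 < k) (h : x ^ k = 1) : x = 1 := by
  have hg : x.g ^ k = 1 := by
    have := congrArg CE.g h; simpa using this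

  have hn : (k : ℤ) * x.n + ∑ j ∈ Finset.range k, c.f (x.g ^ j) x.g = 0 := by
    have := congrArg CE.n h; rwa [pow_n, one_n] at this
  by_cases hx1 : x.g = 1
  · have hsum : ∑ j ∈ Finset.range k, c.f (x.g ^ j) x.g = 0 := by
      apply Finset.sum_eq_zero
      intro j _; simp [hx1, c.one_left]
    ext
    · exact hx1
    · rw [hsum, add_zero] at hn
      simp only [one_n]
      have : (k : ℤ) ≠ 0 := by positivity
      exact (mul_eq_zero.mp hn).resolve_left this
  · exfalso
    -- last term of the sum is 1, all terms are in {0,1}, first term is 0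
    have hlast : c.f (x.g ^ (k - 1)) x.g = 1 := by
      have hxk : x.g ^ (k - 1) = x.g⁻¹ := by
        rw [eq_inv_iff_mul_eq_one, ← pow_succ, Nat.sub_add_cancel hk, hg]
      rw [hxk]; exact c.inv_left x.g hx1
    obtain ⟨k', rfl⟩ : ∃ k', k = k' + 1 := ⟨k - 1, (Nat.succ_pred_eq_of_pos hk).symm⟩
    have hub : ∑ j ∈ Finset.range (k' + 1), c.f (x.g ^ j) x.g ≤ k' := by
      rw [Finset.sum_range_succ']
      have h1 : ∑ j ∈ Finset.range k', c.f (x.g ^ (j + 1)) x.g ≤ ∑ _j ∈ Finset.range k', 1 :=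
        Finset.sum_le_sum (fun j _ => c.le_one _ _)
      simp only [pow_zero, c.one_left, add_zero] at *
      simpa using h1
    have hlb : 1 ≤ ∑ j ∈ Finset.range (k' + 1), c.f (x.g ^ j) x.g := by
      have : c.f (x.g ^ (k' + 1 - 1)) x.g = 1 := hlast
      simp only [Nat.add_sub_cancel] at this
      calc (1 : ℤ) = c.f (x.g ^ k') x.g := this.symm
        _ ≤ ∑ j ∈ Finset.range (k' + 1), c.f (x.g ^ j) x.g :=
          Finset.single_le_sum (fun j _ => c.nonneg _ _) (Finset.self_mem_range_succ k')
    -- so (k'+1) * x.n ∈ [-(k'), -1], impossible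
    set S := ∑ j ∈ Finset.range (k' + 1), c.f (x.g ^ j) x.g with hS
    have heq : ((k' : ℤ) + 1) * x.n = -S := by push_cast at hn ⊢; linarith
    rcases le_or_gt 0 x.n with h0 | h0
    · nlinarith
    · have hxn : x.n ≤ -1 := by omega
      nlinarith

/-- A circular ordering cocycle is symmetric on commuting elements. -/
lemma symm_of_commute (c : CircOrd Γ) {γ δ : Γ} (hcm : γ * δ = δ * γ) :
    c.f γ δ = c.f δ γ := by
  -- it suffices to rule out f γ δ = 1, f δ γ = 0
  suffices H : ∀ γ δ : Γ, γ * δ = δ * γ → c.f γ δ = 1 → c.f δ γ = 0 → False by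
    rcases c.h01 γ δ with h1 | h1 <;> rcases c.h01 δ γ with h2 | h2
    · rw [h1, h2]
    · exact absurd (H δ γ hcm.symm h2 h1) (by simp)
    · exact absurd (H γ δ hcm h1 h2) (by simp)
    · rw [h1, h2]
  intro γ δ hcm h1 h2
  set x : CE c := ⟨γ, 0⟩ with hx
  set y : CE c := ⟨δ, 0⟩ with hy
  have hxy : x * y = y * x * t := by
    ext
    · simp [hx, hy, t, hcm]
    · simp [hx, hy, t, h1, h2, c.one_right]
  have hconj : y⁻¹ * x * y = x * t := by
    rw [mul_assoc, hxy, ← mul_assoc, ← mul_assoc, inv_mul_cancel, one_mul]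
  have hconj4 : y⁻¹ * x ^ 4 * y = x ^ 4 * t ^ 4 := by
    have h4 : (y⁻¹ * x * y) ^ 4 = y⁻¹ * x ^ 4 * y := by
      have := conj_pow (α := CE c) (a := y⁻¹) (b := x) (i := 4)
      simpa [inv_inv] using this
    rw [← ((t_comm x).symm.mul_pow 4), ← hconj, h4]
  have hn := congrArg CE.n hconj4
  have hgy : (y⁻¹ * x ^ 4).g = δ⁻¹ * γ ^ 4 := by simp [hx, hy]
  have b1 := c.nonneg δ δ⁻¹
  have b2 := c.le_one δ⁻¹ (γ ^ 4)
  have b3 := c.le_one (δ⁻¹ * γ ^ 4) δ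
  simp only [mul_n, inv_n, t_pow, pow_n, hgy, mul_g, inv_g, pow_g, hx, hy] at hn
  simp only [c.one_right] at hn
  omega

end CE

namespace CE

variable {Γ : Type*} [Group Γ] {c : CircOrd Γ}

/-- Positive cone on `CE c`. -/
def Pos (w : CE c) : Prop := 0 ≤ w.n ∧ w ≠ 1

lemma not_pos_self_inv (v : CE c) (h1 : Pos v) (h2 : Pos v⁻¹) : False := by
  obtain ⟨hn, hne⟩ := h1
  obtain ⟨hn', -⟩ := h2
  simp only [inv_n] at hn'
  have hf0 : c.f v.g v.g⁻¹ = 0 := by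
    have := c.nonneg v.g v.g⁻¹; omega
  have hg1 : v.g = 1 := by
    by_contra hg
    rw [c.hinv v.g hg] at hf0; omega
  have : v.n = 0 := by rw [hg1] at hn'; rw [inv_one, c.one_left] at hn'; omega
  exact hne (by ext <;> simp [hg1, this])

lemma Pos.mul {v w : CE c} (hv : Pos v) (hw : Pos w) : Pos (v * w) := by
  refine ⟨by have := c.nonneg v.g w.g; have := hv.1; have := hw.1; simp only [mul_n]; omega, ?_⟩
  intro h
  have : w = v⁻¹ := by rw [← one_mul w, ← inv_mul_cancel v, mul_assoc, h, mul_one]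
  rw [this] at hw
  exact not_pos_self_inv v hv hw

lemma pos_trichot (w : CE c) : w = 1 ∨ Pos w ∨ Pos w⁻¹ := by
  rcases le_or_gt 0 w.n with h | h
  · by_cases h1 : w = 1
    · exact Or.inl h1
    · exact Or.inr (Or.inl ⟨h, h1⟩)
  · refine Or.inr (Or.inr ⟨?_, ?_⟩)
    · simp only [inv_n]
      have := c.le_one w.g w.g⁻¹; omega
    · intro hc
      have : w = 1 := by rw [← inv_inv w, hc, inv_one]
      rw [this] at h; simp at h

end CE

lemma leftOrderable_of_injective_hom {Γ H : Type*} [Group Γ] [Group H] {c : CircOrd Γ}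
    (s : H →* CE c) (hinj : Function.Injective s) : LeftOrderable H := by
  refine ⟨fun a b => CE.Pos ((s a)⁻¹ * s b), ?_, ?_⟩
  · refine { trichotomous := fun a b => ?_, irrefl := fun a h => ?_,
             trans := fun a b d h1 h2 => ?_ }
    · intro hab hba
      rcases CE.pos_trichot ((s a)⁻¹ * s b) with h | h | h
      · exact hinj (inv_mul_eq_one.mp h)
      · exact absurd h hab
      · rw [mul_inv_rev, inv_inv] at h
        exact absurd h hba
    · rw [inv_mul_cancel] at h
      exact h.2 rfl
    · have := h1.mul h2
      rwa [mul_assoc, mul_inv_cancel_left] at this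
  · intro a b d h
    have : (s (a * b))⁻¹ * s (a * d) = (s b)⁻¹ * s d := by
      simp [map_mul, mul_inv_rev, mul_assoc, inv_mul_cancel_left]
    rw [this]
    exact h

open groupCohomology in
/-- If `G` is circularly-orderable but not left-orderable, and `H²(G;ℤ)` has finite
exponent `e ≥ 2`, then `G × ℤ/eℤ` is not circularly-orderable. -/
theorem exponent_mem_obstruction_spectrum {G : Type} [Group G]
    (hco : CircularlyOrderable G) (hnlo : ¬ LeftOrderable G)
    (e : ℕ) (he : 2 ≤ e)
    (hexp : AddMonoid.exponent (groupCohomology.H2 (Rep.trivial ℤ G ℤ)) = e) :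
    ¬ CircularlyOrderable (G × Multiplicative (ZMod e)) := by
  rintro ⟨F, h01, hone, hinv, hcoc⟩
  haveI : NeZero e := ⟨by omega⟩
  let c : CircOrd (G × Multiplicative (ZMod e)) := ⟨F, h01, hone, hinv, hcoc⟩
  -- the central element of order e
  let ζ : G × Multiplicative (ZMod e) := (1, Multiplicative.ofAdd (1 : ZMod e))
  have hζpow : ∀ k : ℕ, ζ ^ k = ((1 : G), Multiplicative.ofAdd ((k : ZMod e))) := by
    intro k
    show ((1:G) ^ k, (Multiplicative.ofAdd (1 : ZMod e)) ^ k) = _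
    rw [one_pow, ← ofAdd_nsmul]
    norm_num
  have hζk : ∀ k : ℕ, ζ ^ k = 1 ↔ e ∣ k := by
    intro k
    rw [hζpow k, Prod.mk_eq_one]
    simp only [eq_self_iff_true, true_and]
    rw [show (1 : Multiplicative (ZMod e)) = Multiplicative.ofAdd (0 : ZMod e) from rfl]
    rw [Equiv.apply_eq_iff_eq]
    exact ZMod.natCast_eq_zero_iff k e
  have hζc : ∀ γ : G × Multiplicative (ZMod e), ζ * γ = γ * ζ := fun γ => by
    ext
    · simp [ζ]
    · exact congrArg Multiplicative.toAdd (mul_comm ζ.2 γ.2)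
  have hζ1 : ζ ≠ 1 := by
    intro h
    have h2 := (hζk 1).mp (by simpa using h)
    have := Nat.le_of_dvd one_pos h2
    omega
  -- the restricted cocycle on G
  let κ : G → G → ℤ := fun g h => F (g, 1) (h, 1)
  have hemb : ∀ g h : G, ((g,1) : G × Multiplicative (ZMod e)) * (h,1) = (g*h, 1) := by
    intro g h; ext <;> simp
  have hκmem : (fun p : G × G => κ p.1 p.2) ∈ groupCohomology.cocycles₂ (Rep.trivial ℤ G ℤ) := by
    rw [groupCohomology.mem_cocycles₂_def]
    intro g h j
    have h' := hcoc (g,1) (h,1) (j,1)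
    rw [hemb, hemb] at h'
    simpa [κ] using h'
  obtain ⟨b, hb⟩ : ∃ b : G → ℤ, ∀ g h : G, b h - b (g*h) + b g = (e : ℤ) * κ g h := by
    have h0 : e • (groupCohomology.H2π (Rep.trivial ℤ G ℤ)
        (⟨_, hκmem⟩ : groupCohomology.cocycles₂ (Rep.trivial ℤ G ℤ))) = 0 := by
      rw [← hexp]; exact AddMonoid.exponent_nsmul_eq_zero _
    rw [← map_nsmul, groupCohomology.H2π_eq_zero_iff] at h0
    obtain ⟨x, hx⟩ := h0
    refine ⟨x, fun g h => ?_⟩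
    have h' := congrFun hx (g, h)
    simp only [groupCohomology.d₁₂_hom_apply] at h'
    simp at h'
    convert h' using 2
    rfl
  -- now build the central extension and the splitting
  let z : CE c := ⟨ζ, 0⟩
  have hzg : z.g = ζ := rfl
  have hzn : z.n = 0 := rfl
  have hzc : ∀ w : CE c, Commute z w := by
    intro w
    unfold Commute SemiconjBy
    refine CE.ext ?_ ?_
    · simpa [hzg] using hζc w.g
    · simp only [CE.mul_n, hzg, hzn]
      have h2 : c.f ζ w.g = c.f w.g ζ := CE.symm_of_commute c (hζc w.g)
      omega
  have hζe1 : ζ ^ e = 1 := (hζk e).mpr dvd_rfl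
  set m : ℤ := (z ^ e).n with hm
  have hm1 : 1 ≤ m := by
    rw [hm, CE.pow_n, hzg, hzn]
    have hzinv : ζ ^ (e - 1) = ζ⁻¹ := by
      rw [eq_inv_iff_mul_eq_one, ← pow_succ, Nat.sub_add_cancel (by omega)]
      exact hζe1
    have hterm : c.f (ζ ^ (e - 1)) ζ = 1 := by
      rw [hzinv]; exact c.inv_left _ hζ1
    have hle : (1:ℤ) ≤ ∑ j ∈ Finset.range e, c.f (ζ ^ j) ζ := by
      calc (1:ℤ) = c.f (ζ ^ (e-1)) ζ := hterm.symm
        _ ≤ ∑ j ∈ Finset.range e, c.f (ζ ^ j) ζ :=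
          Finset.single_le_sum (fun j _ => c.nonneg _ _) (Finset.mem_range.mpr (by omega))
    omega
  set M : ℕ := m.toNat with hMdef
  have hMm : (M : ℤ) = m := Int.toNat_of_nonneg (by omega)
  have hzeM : z ^ e = (CE.t : CE c) ^ M := by
    rw [CE.t_pow]
    refine CE.ext ?_ ?_
    · rw [CE.pow_g, hzg, hζe1]
    · rw [← hm, hMm]
  -- gcd(M, e) = 1
  have hgcd : Nat.gcd M e = 1 := by
    by_contra hne
    set d := Nat.gcd M e with hd
    have hdpos : 0 < d := Nat.gcd_pos_of_pos_right M (by omega)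
    have hd2 : 2 ≤ d := by omega
    have hdM : d ∣ M := Nat.gcd_dvd_left M e
    have hde : d ∣ e := Nat.gcd_dvd_right M e
    set v : CE c := z ^ (e / d) * ((CE.t : CE c) ^ (M / d))⁻¹ with hv
    have hvd : v ^ d = 1 := by
      rw [hv, ((CE.t_comm (z ^ (e / d))).symm.pow_right (M / d)).inv_right.mul_pow, ← pow_mul,
        inv_pow, ← pow_mul, Nat.div_mul_cancel hde, Nat.div_mul_cancel hdM, hzeM, mul_inv_cancel]
    have hv1 := CE.torsion_free v d (by omega) hvd
    have hvg : v.g = ζ ^ (e / d) := by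
      simp [hv, CE.mul_g, CE.pow_g, CE.inv_g, hzg, CE.t]
    have : ζ ^ (e / d) = 1 := by rw [← hvg, hv1]; rfl
    have hdvd := (hζk (e / d)).mp this
    have hlt : e / d < e := Nat.div_lt_self (by omega) hd2
    have hpos : 0 < e / d := Nat.div_pos (Nat.le_of_dvd (by omega) hde) hdpos
    have := Nat.le_of_dvd hpos hdvd
    omega
  obtain ⟨α, β, hαβ⟩ : ∃ α β : ℤ, α * (M:ℤ) + β * (e:ℤ) = 1 := by
    have : IsCoprime (M : ℤ) (e : ℤ) := Int.isCoprime_iff_gcd_eq_one.mpr (by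
      rw [Int.gcd_natCast_natCast]; exact hgcd)
    exact this
  set u : CE c := z ^ α * (CE.t : CE c) ^ β with hu
  have huc : ∀ w : CE c, Commute u w := fun w =>
    ((hzc w).zpow_left α).mul_left ((CE.t_comm w).zpow_left β)
  have hut : u ^ (e : ℤ) = (CE.t : CE c) := by
    have h1 : u ^ (e:ℤ) = z ^ (α * e) * (CE.t : CE c) ^ (β * (e:ℤ)) := by
      rw [hu, ((hzc _).zpow_left α).mul_zpow, ← zpow_mul, ← zpow_mul]
    have h2 : z ^ (α * (e:ℤ)) = (CE.t : CE c) ^ ((M:ℤ) * α) := by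
      rw [mul_comm α, zpow_mul, zpow_natCast, hzeM, ← zpow_natCast, ← zpow_mul]
    rw [h1, h2, ← zpow_add, show (M:ℤ) * α + β * (e:ℤ) = 1 by linarith, zpow_one]
  -- the splitting homomorphism
  let gh : G → CE c := fun g => ⟨(g, 1), 0⟩
  have hgg : ∀ g h : G, gh g * gh h = gh (g * h) * u ^ ((e:ℤ) * κ g h) := by
    intro g h
    have ht : (CE.t : CE c) ^ (κ g h : ℤ) = u ^ ((e:ℤ) * κ g h) := by
      rw [← hut, ← zpow_mul]
    rw [← ht, CE.t_zpow]
    refine CE.ext ?_ ?_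
    · show (g, 1) * (h, 1) = (g * h, 1) * 1
      rw [hemb, mul_one]
    · show (0:ℤ) + 0 + c.f (g,1) (h,1) = 0 + κ g h + c.f ((g*h,1)) 1
      rw [c.one_right]
      show (0:ℤ) + 0 + κ g h = 0 + κ g h + 0
      ring
  let s : G → CE c := fun g => gh g * u ^ (-(b g))
  have hshom : ∀ g h : G, s g * s h = s (g * h) := by
    intro g h
    show gh g * u ^ (-(b g)) * (gh h * u ^ (-(b h))) = gh (g*h) * u ^ (-(b (g*h)))
    rw [mul_assoc, ← mul_assoc (u ^ (-(b g))), ((huc (gh h)).zpow_left _).eq, mul_assoc,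
      ← zpow_add, ← mul_assoc, hgg, mul_assoc, ← zpow_add]
    congr 1
    have hbb := hb g h
    congr 1
    linarith
  let S : G →* CE c := MonoidHom.mk' s (fun g h => (hshom g h).symm)
  -- injectivity via the projection to G
  let Q : CE c →* G := (MonoidHom.fst G (Multiplicative (ZMod e))).comp CE.proj
  have hQu : Q u = 1 := by
    show Q (z ^ α * CE.t ^ β) = 1
    rw [map_mul, map_zpow, map_zpow]
    have h1 : Q z = 1 := rfl
    have h2 : Q (CE.t : CE c) = 1 := rfl
    rw [h1, h2, one_zpow, one_zpow, one_mul]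
  have hQs : ∀ g : G, Q (S g) = g := by
    intro g
    show Q (gh g * u ^ (-(b g))) = g
    rw [map_mul, map_zpow, hQu, one_zpow, mul_one]
    rfl
  have hSinj : Function.Injective S := by
    intro a b hab
    have h3 := congrArg Q hab
    rwa [hQs, hQs] at h3
  exact hnlo (leftOrderable_of_injective_hom S hSinj)
end

section
/- Let G be a group whose second group homology H₂(G;ℤ) with trivial integer coefficients is zero. If G is circularly-orderable, then the commutator subgroup [G,G] is left-orderable. -/
/-- The boundary map `∂₂ : ℤ[G²] → ℤ[G]` of the bar complex computing group homology
with trivial integer coefficients: `∂₂[g|h] = [h] - [gh] + [g]`. -/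
noncomputable def barD2 (G : Type*) [Group G] : ((G × G) →₀ ℤ) →ₗ[ℤ] (G →₀ ℤ) :=
  Finsupp.lsum ℤ fun p : G × G =>
    LinearMap.toSpanSingleton ℤ (G →₀ ℤ)
      (Finsupp.single p.2 1 - Finsupp.single (p.1 * p.2) 1 + Finsupp.single p.1 1)

/-- The boundary map `∂₃ : ℤ[G³] → ℤ[G²]` of the bar complex computing group homology
with trivial integer coefficients: `∂₃[g|h|k] = [h|k] - [gh|k] + [g|hk] - [g|h]`. -/
noncomputable def barD3 (G : Type*) [Group G] : ((G × G × G) →₀ ℤ) →ₗ[ℤ] ((G × G) →₀ ℤ) :=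
  Finsupp.lsum ℤ fun t : G × G × G =>
    LinearMap.toSpanSingleton ℤ ((G × G) →₀ ℤ)
      (Finsupp.single (t.2.1, t.2.2) 1 - Finsupp.single (t.1 * t.2.1, t.2.2) 1
        + Finsupp.single (t.1, t.2.1 * t.2.2) 1 - Finsupp.single (t.1, t.2.1) 1)

/-- If `H₂(G;ℤ) = 0` (every 2-cycle of the bar complex is a boundary) and `G` is
circularly-orderable, then the commutator subgroup `[G,G]` is left-orderable. -/
theorem commutator_leftOrderable_of_H2_trivial {G : Type*} [Group G]
    (hH2 : ∀ x : (G × G) →₀ ℤ, barD2 G x = 0 → ∃ y : (G × G × G) →₀ ℤ, barD3 G y = x)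
    (hco : CircularlyOrderable G) :
    LeftOrderable (commutator G) := by
  classical
  obtain ⟨f, hf01, hf1, hfinv, hcoc⟩ := hco
  -- the pairing with f
  set F : ((G × G) →₀ ℤ) →ₗ[ℤ] ℤ :=
    Finsupp.lsum ℤ fun p : G × G => LinearMap.toSpanSingleton ℤ ℤ (f p.1 p.2) with hFdef
  have hFsingle : ∀ p : G × G, F (Finsupp.single p 1) = f p.1 p.2 := by
    intro p
    simp [hFdef, Finsupp.lsum_single, LinearMap.toSpanSingleton_apply_one]
  have hd2single : ∀ g h : G, barD2 G (Finsupp.single (g, h) 1) =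
      Finsupp.single h 1 - Finsupp.single (g * h) 1 + Finsupp.single g 1 := by
    intro g h
    simp [barD2, Finsupp.lsum_single, LinearMap.toSpanSingleton_apply_one]
  have hd3single : ∀ t : G × G × G, barD3 G (Finsupp.single t 1) =
      Finsupp.single (t.2.1, t.2.2) 1 - Finsupp.single (t.1 * t.2.1, t.2.2) 1
        + Finsupp.single (t.1, t.2.1 * t.2.2) 1 - Finsupp.single (t.1, t.2.1) 1 := by
    intro t
    simp [barD3, Finsupp.lsum_single, LinearMap.toSpanSingleton_apply_one]
  -- F vanishes on 3-boundaries, by the cocycle condition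
  have hF3 : ∀ y : (G × G × G) →₀ ℤ, F (barD3 G y) = 0 := by
    intro y
    induction y using Finsupp.induction_linear with
    | zero => simp
    | add a b ha hb => rw [map_add, map_add, ha, hb]; ring
    | single t n =>
      have hs : (Finsupp.single t n : (G × G × G) →₀ ℤ) = n • Finsupp.single t 1 := by
        simp
      rw [hs, map_smul, map_smul, hd3single t, map_sub, map_add, map_sub,
        hFsingle, hFsingle, hFsingle, hFsingle]
      rw [hcoc t.1 t.2.1 t.2.2, smul_zero]
  -- well-definedness of the winding number
  have hwd : ∀ a b : (G × G) →₀ ℤ, barD2 G a = barD2 G b → F a = F b := by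
    intro a b h
    have h0 : barD2 G (a - b) = 0 := by rw [map_sub, h, sub_self]
    obtain ⟨y, hy⟩ := hH2 _ h0
    have := hF3 y
    rw [hy, map_sub] at this
    linarith
  -- every element of the commutator subgroup is a 1-boundary
  have hmem : ∀ c : G, c ∈ commutator G →
      ∃ a : (G × G) →₀ ℤ, barD2 G a = Finsupp.single c 1 := by
    set N : Submodule ℤ (G →₀ ℤ) := LinearMap.range (barD2 G) with hN
    have hq : ∀ g h : G,
        (Submodule.Quotient.mk (Finsupp.single (g * h) 1) : (G →₀ ℤ) ⧸ N) =
          Submodule.Quotient.mk (Finsupp.single g 1 + Finsupp.single h 1) := by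
      intro g h
      rw [Submodule.Quotient.eq]
      refine ⟨-Finsupp.single (g, h) 1, ?_⟩
      rw [map_neg, hd2single g h]
      abel
    let q : G →* Multiplicative ((G →₀ ℤ) ⧸ N) :=
      { toFun := fun g => Multiplicative.ofAdd
          (Submodule.Quotient.mk (Finsupp.single g 1))
        map_one' := by
          have h1 : (Finsupp.single (1 : G) 1 : G →₀ ℤ) ∈ N := by
            refine ⟨Finsupp.single (1, 1) 1, ?_⟩
            rw [hd2single]
            simp
          have : (Submodule.Quotient.mk (Finsupp.single (1 : G) 1) :
              (G →₀ ℤ) ⧸ N) = 0 := (Submodule.Quotient.mk_eq_zero N).2 h1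
          simpa using congrArg Multiplicative.ofAdd this
        map_mul' := by
          intro g h
          have := hq g h
          simp only [Submodule.Quotient.mk_add] at this
          simpa using congrArg Multiplicative.ofAdd this }
    intro c hc
    have hker : q c = 1 := Abelianization.commutator_subset_ker q hc
    have hc0 : (Submodule.Quotient.mk (Finsupp.single c 1) : (G →₀ ℤ) ⧸ N) = 0 := by
      simpa [q] using hker
    exact (Submodule.Quotient.mk_eq_zero N).1 hc0
  -- the winding number φ
  set a : commutator G → ((G × G) →₀ ℤ) := fun c => (hmem c c.2).choose with hadef
  have ha : ∀ c : commutator G, barD2 G (a c) = Finsupp.single (c : G) 1 :=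
    fun c => (hmem c c.2).choose_spec
  set φ : commutator G → ℤ := fun c => F (a c) with hφdef
  have hφmul : ∀ c d : commutator G, φ (c * d) = φ c + φ d - f (c : G) (d : G) := by
    intro c d
    have key : barD2 G (a (c * d)) =
        barD2 G (a c + a d - Finsupp.single ((c : G), (d : G)) 1) := by
      rw [ha, map_sub, map_add, ha, ha, hd2single]
      push_cast
      abel
    have := hwd _ _ key
    rw [map_sub, map_add, hFsingle] at this
    simpa [hφdef] using this
  have hφone : φ 1 = 0 := by
    have key : barD2 G (a 1) = barD2 G (Finsupp.single ((1 : G), (1 : G)) 1) := by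
      rw [ha, hd2single]
      simp
    have := hwd _ _ key
    rw [hFsingle] at this
    simpa [hφdef, (hf1 1).1] using this
  have hφinv : ∀ c : commutator G, φ c + φ c⁻¹ = f (c : G) ((c : G))⁻¹ := by
    intro c
    have := hφmul c c⁻¹
    rw [mul_inv_cancel, hφone] at this
    push_cast at this
    linarith
  -- the positive cone
  set P : commutator G → Prop := fun c => φ c ≤ 0 ∧ ¬((c : G) = 1 ∧ φ c = 0) with hPdef
  have hfnonneg : ∀ g h : G, 0 ≤ f g h := by
    intro g h
    rcases hf01 g h with h' | h' <;> omega
  have hP1 : ¬ P 1 := by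
    intro h
    exact h.2 ⟨rfl, hφone⟩
  have hPmul : ∀ c d : commutator G, P c → P d → P (c * d) := by
    intro c d hc hd
    constructor
    · rw [hφmul]
      have := hfnonneg (c : G) (d : G)
      linarith [hc.1, hd.1]
    · rintro ⟨h1, h2⟩
      rw [hφmul] at h2
      have hf0 : f (c : G) (d : G) ≤ 0 := by linarith [hc.1, hd.1]
      have hfz : f (c : G) (d : G) = 0 := le_antisymm hf0 (hfnonneg _ _)
      have hφc : φ c = 0 := by linarith [hc.1, hd.1]
      have hcne : (c : G) ≠ 1 := fun h => hc.2 ⟨h, hφc⟩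
      have hcd : (c : G) * (d : G) = 1 := by push_cast at h1; exact h1
      have hdinv : (d : G) = ((c : G))⁻¹ := eq_inv_of_mul_eq_one_right hcd
      rw [hdinv, hfinv _ hcne] at hfz
      exact one_ne_zero hfz
  have hPtri : ∀ c : commutator G, c ≠ 1 → P c ∨ P c⁻¹ := by
    intro c hc
    have hcne : (c : G) ≠ 1 := by
      intro h
      exact hc (Subtype.ext h)
    have hcinvne : ((c : G))⁻¹ ≠ 1 := inv_ne_one.2 hcne
    have hsum : φ c + φ c⁻¹ = 1 := by rw [hφinv, hfinv _ hcne]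
    by_cases h : φ c ≤ 0
    · left
      exact ⟨h, fun hh => hcne hh.1⟩
    · right
      push_neg at h
      refine ⟨by omega, fun hh => ?_⟩
      have : ((c⁻¹ : commutator G) : G) = ((c : G))⁻¹ := rfl
      rw [this] at hh
      exact hcinvne hh.1
  -- the order
  refine ⟨fun x y => P (x⁻¹ * y), ?_, ?_⟩
  · refine { trichotomous := ?_, irrefl := ?_, trans := ?_ }
    · intro x y
      rcases eq_or_ne x y with h | h
      · exact fun _ _ => h
      · intro h1 h2
        exfalso
        have hne : x⁻¹ * y ≠ 1 := by
          intro hh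
          exact h (inv_mul_eq_one.1 hh)
        rcases hPtri _ hne with hp | hp
        · exact h1 hp
        · have : (x⁻¹ * y)⁻¹ = y⁻¹ * x := by group
          rw [this] at hp
          exact h2 hp
    · intro x h
      rw [inv_mul_cancel] at h
      exact hP1 h
    · intro x y z hxy hyz
      have := hPmul _ _ hxy hyz
      have heq : (x⁻¹ * y) * (y⁻¹ * z) = x⁻¹ * z := by group
      rwa [heq] at this
  · intro x y z h
    have heq : (x * y)⁻¹ * (x * z) = y⁻¹ * z := by group
    rwa [heq]
end

section
/- Suppose G is a circularly-orderable group that is not left-orderable, the second group homology H₂(G;ℤ) with trivial integer coefficients is zero, and the abelianization of G is cyclic of order n. Then for every d ≥ 2 with gcd(n,d) = 1, the product G × ℤ/dℤ is circularly-orderable (i.e., Ob(G) ⊆ {d ∈ ℕ, d ≥ 2 : gcd(n,d) ≠ 1}). -/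
private lemma barD2_single {G : Type*} [Group G] (g h : G) :
    barD2 G (Finsupp.single (g, h) 1) =
      Finsupp.single h 1 - Finsupp.single (g * h) 1 + Finsupp.single g 1 := by
  simp [barD2, Finsupp.lsum_single, LinearMap.toSpanSingleton_apply_one]

private lemma barD3_single {G : Type*} [Group G] (g h k : G) :
    barD3 G (Finsupp.single (g, h, k) 1) =
      Finsupp.single (h, k) 1 - Finsupp.single (g * h, k) 1
        + Finsupp.single (g, h * k) 1 - Finsupp.single (g, h) 1 := by
  simp [barD3, Finsupp.lsum_single, LinearMap.toSpanSingleton_apply_one]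

private lemma exists_phi {G : Type*} [Group G] (f : G → G → ℤ)
    (hfcoc : ∀ g h k : G, f h k - f (g * h) k + f g (h * k) - f g h = 0)
    (hH2 : ∀ x : (G × G) →₀ ℤ, barD2 G x = 0 → ∃ y : (G × G × G) →₀ ℤ, barD3 G y = x)
    (n d : ℕ) (hcard : Nat.card (Abelianization G) = n) (hgcd : Nat.Coprime n d) :
    ∃ φ : G → ZMod d, ∀ g h : G, ((f g h : ℤ) : ZMod d) = φ g + φ h - φ (g * h) := by
  classical
  set S : Submodule ℤ (G →₀ ℤ) := LinearMap.range (barD2 G) with hS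
  -- the map g ↦ [single g 1] into the quotient is multiplicative
  have hθmul : ∀ g h : G, Submodule.Quotient.mk (p := S) (Finsupp.single (g * h) 1)
      = Submodule.Quotient.mk (p := S) (Finsupp.single g 1)
        + Submodule.Quotient.mk (p := S) (Finsupp.single h 1) := by
    intro g h
    have hmem : Finsupp.single g 1 + Finsupp.single h 1 - Finsupp.single (g * h) 1 ∈ S :=
      ⟨Finsupp.single (g, h) 1, by rw [barD2_single]; abel⟩
    have h0 : (Submodule.Quotient.mk (p := S)
        (Finsupp.single g 1 + Finsupp.single h 1 - Finsupp.single (g * h) 1)) = 0 :=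
      (Submodule.Quotient.mk_eq_zero S).2 hmem
    rw [Submodule.Quotient.mk_sub, Submodule.Quotient.mk_add, sub_eq_zero] at h0
    exact h0.symm
  set Θ : G →* Multiplicative (((G →₀ ℤ)) ⧸ S) :=
    MonoidHom.mk' (fun g => Multiplicative.ofAdd (Submodule.Quotient.mk (Finsupp.single g 1)))
      (by intro g h
          simp only [hθmul, ofAdd_add]) with hΘ
  have hpow : ∀ g : G, (n : ℤ) • Finsupp.single g 1 ∈ S := by
    intro g
    have h1 : Θ (g ^ n) = 1 := by
      rw [← Abelianization.lift_apply_of (f := Θ) (g ^ n), map_pow, ← hcard, pow_card_eq_one', map_one]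
    have h2 : Θ (g ^ n) = Θ g ^ n := map_pow Θ g n
    have h3 : (n : ℤ) • (Submodule.Quotient.mk (p := S) (Finsupp.single g 1)) = 0 := by
      have := h1.symm.trans h2
      have h4 : Multiplicative.toAdd ((1 : Multiplicative ((G →₀ ℤ) ⧸ S)))
          = Multiplicative.toAdd (Θ g ^ n) := congrArg Multiplicative.toAdd this
      simp only [toAdd_one, toAdd_pow, hΘ, MonoidHom.mk'_apply, toAdd_ofAdd] at h4
      rw [natCast_zsmul]
      exact h4.symm
    rw [← Submodule.Quotient.mk_smul, Submodule.Quotient.mk_eq_zero] at h3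
    exact h3
  choose x hx using fun g : G => LinearMap.mem_range.1 (hpow g)
  -- evaluation of f as a linear functional on 2-chains
  set F2 : ((G × G) →₀ ℤ) →ₗ[ℤ] ℤ :=
    Finsupp.linearCombination ℤ (fun p : G × G => f p.1 p.2) with hF2
  have hF2single : ∀ g h : G, F2 (Finsupp.single (g, h) 1) = f g h := by
    intro g h
    simp [hF2, Finsupp.linearCombination_single]
  have hFB3 : ∀ y, F2 (barD3 G y) = 0 := by
    intro y
    induction y using Finsupp.induction_linear with
    | zero => simp
    | add a b ha hb => rw [map_add, map_add, ha, hb, add_zero]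
    | single t b =>
        have : Finsupp.single t b = b • Finsupp.single t (1 : ℤ) := by
          rw [Finsupp.smul_single, smul_eq_mul, mul_one]
        rw [this, map_smul, map_smul]
        obtain ⟨g, h, k⟩ := t
        rw [barD3_single, map_sub, map_add, map_sub, hF2single, hF2single, hF2single, hF2single]
        rw [hfcoc g h k, smul_zero]
  have hker : ∀ z, barD2 G z = 0 → F2 z = 0 := by
    intro z hz
    obtain ⟨y, hy⟩ := hH2 z hz
    rw [← hy, hFB3]
  have key : ∀ g h : G, (n : ℤ) * f g h = F2 (x g) + F2 (x h) - F2 (x (g * h)) := by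
    intro g h
    have hz : barD2 G (x g + x h - x (g * h) - (n : ℤ) • Finsupp.single (g, h) 1) = 0 := by
      rw [map_sub, map_sub, map_add, map_smul, hx, hx, hx, barD2_single]
      have : ((n : ℤ) • (Finsupp.single h 1 - Finsupp.single (g * h) 1 + Finsupp.single g 1) : G →₀ ℤ)
          = (n : ℤ) • Finsupp.single h (1 : ℤ) - (n : ℤ) • Finsupp.single (g * h) (1 : ℤ)
            + (n : ℤ) • Finsupp.single g (1 : ℤ) := by
        rw [smul_add, smul_sub]
      rw [this]
      abel
    have h0 := hker _ hz
    rw [map_sub, map_sub, map_add, map_smul, hF2single] at h0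
    rw [smul_eq_mul] at h0
    linarith
  -- invert n mod d
  set u : ZMod d := (((ZMod.unitOfCoprime n hgcd)⁻¹ : (ZMod d)ˣ) : ZMod d) with hu
  have hun : u * (n : ZMod d) = 1 := by
    have h1 : ((ZMod.unitOfCoprime n hgcd : (ZMod d)ˣ) : ZMod d) = (n : ZMod d) :=
      ZMod.coe_unitOfCoprime n hgcd
    rw [hu, ← h1]
    rw [← Units.val_mul, inv_mul_cancel, Units.val_one]
  refine ⟨fun g => u * ((F2 (x g) : ℤ) : ZMod d), fun g h => ?_⟩
  have hc : ((n : ℤ) : ZMod d) * ((f g h : ℤ) : ZMod d)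
      = ((F2 (x g) : ℤ) : ZMod d) + ((F2 (x h) : ℤ) : ZMod d) - ((F2 (x (g * h)) : ℤ) : ZMod d) := by
    have := congrArg (fun z : ℤ => ((z : ℤ) : ZMod d)) (key g h)
    push_cast at this ⊢
    exact this
  have : ((f g h : ℤ) : ZMod d) = u * (((n : ℤ) : ZMod d) * ((f g h : ℤ) : ZMod d)) := by
    rw [← mul_assoc]
    norm_cast
    rw [hun, one_mul]
  rw [this, hc]
  ring

private lemma nat_mod_cases (s r dd : ℕ) (hdd : 0 < dd) (hs : s < 2 * dd)
    (h : s % dd = r) : s = r ∨ s = dd + r := by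
  by_cases hlt : s < dd
  · rw [Nat.mod_eq_of_lt hlt] at h
    omega
  · have h3 : s % dd = (s - dd) % dd := Nat.mod_eq_sub_mod (le_of_not_gt hlt)
    rw [Nat.mod_eq_of_lt (show s - dd < dd by omega)] at h3
    omega

private lemma circ_of_phi {G : Type*} [Group G] (f : G → G → ℤ) (hf : IsCircularOrdering f)
    (d : ℕ) (hd : 2 ≤ d) (φ : G → ZMod d)
    (hφ : ∀ g h : G, ((f g h : ℤ) : ZMod d) = φ g + φ h - φ (g * h)) :
    CircularlyOrderable (G × Multiplicative (ZMod d)) := by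
  haveI : NeZero d := ⟨by omega⟩
  obtain ⟨hf01, hfid, hfinv, hfcoc⟩ := hf
  have hdpos : (0 : ℤ) < (d : ℤ) := by exact_mod_cast (by omega : 0 < d)
  have hd0 : (d : ℤ) ≠ 0 := ne_of_gt hdpos
  have hφ1 : φ 1 = 0 := by
    have h := hφ 1 1
    rw [(hfid 1).1, one_mul] at h
    push_cast at h
    linear_combination -h
  -- the representative function
  set m : G → ZMod d → ℤ := fun g a => ((a - φ g).val : ℤ) with hm
  have hmeq : ∀ g a, m g a = ((a - φ g).val : ℤ) := fun _ _ => rfl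
  have hm0 : ∀ g a, 0 ≤ m g a := fun g a => Int.natCast_nonneg _
  have hmlt : ∀ g a, m g a < d := fun g a => by
    rw [hmeq]; exact_mod_cast ZMod.val_lt (a - φ g)
  have hmod : ∀ g a, ((m g a : ℤ) : ZMod d) = a - φ g := by
    intro g a
    rw [hmeq]
    push_cast
    rw [ZMod.natCast_val, ZMod.cast_id]
  have hm1 : m 1 0 = 0 := by
    rw [hmeq]
    simp [hφ1]
  -- the numerator
  set N : (G × Multiplicative (ZMod d)) → (G × Multiplicative (ZMod d)) → ℤ := fun x y =>
    m x.1 (Multiplicative.toAdd x.2) + m y.1 (Multiplicative.toAdd y.2) + f x.1 y.1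
      - m (x.1 * y.1) (Multiplicative.toAdd x.2 + Multiplicative.toAdd y.2) with hN
  have hNeq : ∀ x y, N x y =
      m x.1 (Multiplicative.toAdd x.2) + m y.1 (Multiplicative.toAdd y.2) + f x.1 y.1
        - m (x.1 * y.1) (Multiplicative.toAdd x.2 + Multiplicative.toAdd y.2) := fun _ _ => rfl
  have hNd : ∀ x y, (d : ℤ) ∣ N x y := by
    intro x y
    rw [← ZMod.intCast_zmod_eq_zero_iff_dvd, hNeq]
    push_cast
    rw [hmod, hmod, hmod, hφ x.1 y.1]
    ring
  refine ⟨fun x y => N x y / d, ?_, ?_, ?_, ?_⟩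
  · -- values in {0,1}
    intro x y
    show N x y / (d : ℤ) = 0 ∨ N x y / (d : ℤ) = 1
    obtain ⟨k, hk⟩ := hNd x y
    have hFk : N x y / (d : ℤ) = k := by rw [hk, Int.mul_ediv_cancel_left _ hd0]
    have hlb : -(d : ℤ) < N x y := by
      have h1 := hm0 (x.1 * y.1) (Multiplicative.toAdd x.2 + Multiplicative.toAdd y.2)
      have h2 := hm0 x.1 (Multiplicative.toAdd x.2)
      have h3 := hm0 y.1 (Multiplicative.toAdd y.2)
      have h4 := hmlt (x.1 * y.1) (Multiplicative.toAdd x.2 + Multiplicative.toAdd y.2)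
      rw [hNeq]
      rcases hf01 x.1 y.1 with h | h <;> rw [h] <;> linarith
    have hub : N x y < 2 * d := by
      have h1 := hm0 (x.1 * y.1) (Multiplicative.toAdd x.2 + Multiplicative.toAdd y.2)
      have h2 := hmlt x.1 (Multiplicative.toAdd x.2)
      have h3 := hmlt y.1 (Multiplicative.toAdd y.2)
      rw [hNeq]
      rcases hf01 x.1 y.1 with h | h <;> rw [h] <;> linarith
    rw [hk] at hlb hub
    have h1 : (-1 : ℤ) < k := by
      have h := (mul_lt_mul_iff_right₀ hdpos).1 (by linarith : (d : ℤ) * (-1) < (d : ℤ) * k)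
      exact h
    have h2 : k < 2 := by
      exact (mul_lt_mul_iff_right₀ hdpos).1 (by linarith : (d : ℤ) * k < (d : ℤ) * 2)
    rw [hFk]
    omega
  · -- identity
    intro x
    constructor
    · show N 1 x / (d : ℤ) = 0
      have h : N 1 x = 0 := by
        rw [hNeq]
        simp only [Prod.fst_one, Prod.snd_one, toAdd_one, one_mul, zero_add]
        rw [hm1, (hfid x.1).1]
        ring
      rw [h, Int.zero_ediv]
    · show N x 1 / (d : ℤ) = 0
      have h : N x 1 = 0 := by
        rw [hNeq]
        simp only [Prod.fst_one, Prod.snd_one, toAdd_one, mul_one, add_zero]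
        rw [hm1, (hfid x.1).2]
        ring
      rw [h, Int.zero_ediv]
  · -- inverses
    intro x hx
    show N x x⁻¹ / (d : ℤ) = 1
    have hinv1 : (x⁻¹).1 = x.1⁻¹ := rfl
    have hinv2 : Multiplicative.toAdd ((x⁻¹).2) = -Multiplicative.toAdd x.2 := rfl
    have hNval : N x x⁻¹ = d := by
      rw [hNeq, hinv1, hinv2, mul_inv_cancel, add_neg_cancel, hm1]
      by_cases hg : x.1 = 1
      · have ha : Multiplicative.toAdd x.2 ≠ 0 := by
          intro h0
          apply hx
          have h2 : x.2 = 1 := by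
            have := congrArg Multiplicative.ofAdd h0
            simpa using this
          exact Prod.ext hg h2
        set a := Multiplicative.toAdd x.2 with hadef
        have hval : (a - φ x.1).val + (-a - φ x.1⁻¹).val = d := by
          rw [hg, inv_one, hφ1, sub_zero, sub_zero]
          have hsum : ((a.val + (-a).val) % d : ℕ) = 0 := by
            have h5 := ZMod.val_add a (-a)
            rw [add_neg_cancel, ZMod.val_zero] at h5
            omega
          have h1 : a.val < d := ZMod.val_lt a
          have h2 : (-a).val < d := ZMod.val_lt (-a)
          have h3 : a.val ≠ 0 := fun h => ha ((ZMod.val_eq_zero a).1 h)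
          rcases nat_mod_cases (a.val + (-a).val) 0 d (by omega) (by omega) hsum with h | h <;>
            omega
        rw [hg, inv_one] at hval
        rw [hg, inv_one, (hfid 1).1, hmeq, hmeq]
        push_cast
        omega
      · have hφinv : φ x.1 + φ x.1⁻¹ = 1 := by
          have h := hφ x.1 x.1⁻¹
          rw [mul_inv_cancel, hφ1, sub_zero, hfinv x.1 hg] at h
          push_cast at h
          linear_combination -h
        set a := Multiplicative.toAdd x.2 with hadef
        have hsum : (a - φ x.1) + (-a - φ x.1⁻¹) = -1 := by
          have h : (a - φ x.1) + (-a - φ x.1⁻¹) = -(φ x.1 + φ x.1⁻¹) := by ring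
          rw [h, hφinv]
        have hneg1 : ((-1 : ZMod d)).val = d - 1 := by
          have h6 : (-1 : ZMod d) = ((d - 1 : ℕ) : ZMod d) := by
            have h7 : ((d - 1 : ℕ) : ZMod d) + 1 = 0 := by
              have h8 : ((d - 1 : ℕ) : ZMod d) + ((1 : ℕ) : ZMod d) = ((d : ℕ) : ZMod d) := by
                rw [← Nat.cast_add]
                congr 1
                omega
              simpa using h8
            linear_combination -h7
          rw [h6, ZMod.val_cast_of_lt (by omega)]
        have hval : (a - φ x.1).val + (-a - φ x.1⁻¹).val = d - 1 := by
          have hmodsum := ZMod.val_add (a - φ x.1) (-a - φ x.1⁻¹)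
          rw [hsum, hneg1] at hmodsum
          have h1 : (a - φ x.1).val < d := ZMod.val_lt _
          have h2 : (-a - φ x.1⁻¹).val < d := ZMod.val_lt _
          rcases nat_mod_cases ((a - φ x.1).val + (-a - φ x.1⁻¹).val) (d - 1) d (by omega)
            (by omega) hmodsum.symm with h | h <;> omega
        rw [hfinv x.1 hg, hmeq, hmeq]
        push_cast
        omega
    rw [hNval, Int.ediv_self hd0]
  · -- cocycle condition
    intro x y z
    show N y z / (d : ℤ) - N (x * y) z / (d : ℤ) + N x (y * z) / (d : ℤ) - N x y / (d : ℤ) = 0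
    have hmul : ∀ a b : G × Multiplicative (ZMod d), (a * b).1 = a.1 * b.1 := fun _ _ => rfl
    have hmul2 : ∀ a b : G × Multiplicative (ZMod d),
        Multiplicative.toAdd ((a * b).2) = Multiplicative.toAdd a.2 + Multiplicative.toAdd b.2 :=
      fun _ _ => rfl
    have hdN : N y z - N (x * y) z + N x (y * z) - N x y = 0 := by
      rw [hNeq, hNeq, hNeq, hNeq]
      simp only [hmul, hmul2, mul_assoc, add_assoc]
      linarith [hfcoc x.1 y.1 z.1]
    obtain ⟨k1, hk1⟩ := hNd y z
    obtain ⟨k2, hk2⟩ := hNd (x * y) z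
    obtain ⟨k3, hk3⟩ := hNd x (y * z)
    obtain ⟨k4, hk4⟩ := hNd x y
    rw [hk1, hk2, hk3, hk4, Int.mul_ediv_cancel_left _ hd0, Int.mul_ediv_cancel_left _ hd0,
      Int.mul_ediv_cancel_left _ hd0, Int.mul_ediv_cancel_left _ hd0]
    rw [hk1, hk2, hk3, hk4] at hdN
    have h9 : (d : ℤ) * (k1 - k2 + k3 - k4) = 0 := by linarith
    rcases mul_eq_zero.1 h9 with h | h
    · exact absurd h hd0
    · linarith

/-- If `G` is circularly-orderable but not left-orderable, `H₂(G;ℤ) = 0`, and the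
abelianization of `G` is cyclic of order `n`, then `G × ℤ/dℤ` is circularly-orderable
for every `d ≥ 2` with `gcd(n,d) = 1`. -/
theorem obstruction_spectrum_subset_of_H2_trivial {G : Type*} [Group G]
    (hco : CircularlyOrderable G) (hnlo : ¬ LeftOrderable G)
    (hH2 : ∀ x : (G × G) →₀ ℤ, barD2 G x = 0 → ∃ y : (G × G × G) →₀ ℤ, barD3 G y = x)
    (n : ℕ) (hcyc : IsCyclic (Abelianization G)) (hcard : Nat.card (Abelianization G) = n)
    (d : ℕ) (hd : 2 ≤ d) (hgcd : Nat.gcd n d = 1) :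
    CircularlyOrderable (G × Multiplicative (ZMod d)) := by
  obtain ⟨f, hf⟩ := hco
  obtain ⟨φ, hφ⟩ := exists_phi f hf.2.2.2 hH2 n d hcard hgcd
  exact circ_of_phi f hf d hd φ hφ
end

section
/- Let G be a finitely generated, amenable, circularly-orderable group that is not left-orderable, and suppose the abelianization G/[G,G] is finite. Then there exists n ≥ 2 such that the n-fold direct product Gⁿ = G × ⋯ × G is not circularly-orderable. -/
/-- A real-valued function on `G` is bounded. -/
def IsBoundedFn {G : Type*} (φ : G → ℝ) : Prop :=
  ∃ C : ℝ, ∀ x : G, |φ x| ≤ C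

/-- A group is amenable if it admits a left-invariant mean on the space of bounded
real-valued functions on the group: a positive, normalized, linear, left-invariant
functional on bounded functions. -/
def IsAmenable (G : Type*) [Group G] : Prop :=
  ∃ m : (G → ℝ) → ℝ,
    (∀ φ ψ : G → ℝ, IsBoundedFn φ → IsBoundedFn ψ → m (fun x => φ x + ψ x) = m φ + m ψ) ∧
    (∀ (c : ℝ) (φ : G → ℝ), IsBoundedFn φ → m (fun x => c * φ x) = c * m φ) ∧
    m (fun _ => 1) = 1 ∧
    (∀ φ : G → ℝ, IsBoundedFn φ → (∀ x : G, 0 ≤ φ x) → 0 ≤ m φ) ∧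
    (∀ (g : G) (φ : G → ℝ), IsBoundedFn φ → m (fun x => φ (g * x)) = m φ)

section Bounded

variable {α : Type*}

lemma isBoundedFn_const (c : ℝ) : IsBoundedFn (fun _ : α => c) := ⟨|c|, fun _ => le_rfl⟩

lemma IsBoundedFn.add {φ ψ : α → ℝ} (h1 : IsBoundedFn φ) (h2 : IsBoundedFn ψ) :
    IsBoundedFn (fun x => φ x + ψ x) := by
  obtain ⟨C, hC⟩ := h1; obtain ⟨D, hD⟩ := h2
  exact ⟨C + D, fun x => (abs_add_le _ _).trans (add_le_add (hC x) (hD x))⟩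

lemma IsBoundedFn.neg {φ : α → ℝ} (h : IsBoundedFn φ) : IsBoundedFn (fun x => -φ x) := by
  obtain ⟨C, hC⟩ := h; exact ⟨C, fun x => by rw [abs_neg]; exact hC x⟩

lemma IsBoundedFn.sub {φ ψ : α → ℝ} (h1 : IsBoundedFn φ) (h2 : IsBoundedFn ψ) :
    IsBoundedFn (fun x => φ x - ψ x) := by
  have := h1.add h2.neg
  simpa [sub_eq_add_neg] using this

end Bounded

section Mean

def IsMean {H : Type*} [Group H] (m : (H → ℝ) → ℝ) : Prop :=
  (∀ φ ψ : H → ℝ, IsBoundedFn φ → IsBoundedFn ψ → m (fun x => φ x + ψ x) = m φ + m ψ) ∧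
  (∀ (c : ℝ) (φ : H → ℝ), IsBoundedFn φ → m (fun x => c * φ x) = c * m φ) ∧
  m (fun _ => 1) = 1 ∧
  (∀ φ : H → ℝ, IsBoundedFn φ → (∀ x : H, 0 ≤ φ x) → 0 ≤ m φ) ∧
  (∀ (g : H) (φ : H → ℝ), IsBoundedFn φ → m (fun x => φ (g * x)) = m φ)

variable {H : Type*} [Group H] {m : (H → ℝ) → ℝ}

lemma IsMean.addm (hm : IsMean m) : ∀ φ ψ : H → ℝ, IsBoundedFn φ → IsBoundedFn ψ →
    m (fun x => φ x + ψ x) = m φ + m ψ := hm.1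
lemma IsMean.smulm (hm : IsMean m) : ∀ (c : ℝ) (φ : H → ℝ), IsBoundedFn φ →
    m (fun x => c * φ x) = c * m φ := hm.2.1
lemma IsMean.onem (hm : IsMean m) : m (fun _ => 1) = 1 := hm.2.2.1
lemma IsMean.posm (hm : IsMean m) : ∀ φ : H → ℝ, IsBoundedFn φ → (∀ x : H, 0 ≤ φ x) →
    0 ≤ m φ := hm.2.2.2.1
lemma IsMean.invm (hm : IsMean m) : ∀ (g : H) (φ : H → ℝ), IsBoundedFn φ →
    m (fun x => φ (g * x)) = m φ := hm.2.2.2.2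

lemma IsMean.constm (hm : IsMean m) (c : ℝ) : m (fun _ => c) = c := by
  have h := hm.smulm c (fun _ => 1) (isBoundedFn_const 1)
  simpa [hm.onem] using h

lemma IsMean.negm (hm : IsMean m) {φ : H → ℝ} (hφ : IsBoundedFn φ) :
    m (fun x => -φ x) = -m φ := by
  have h := hm.smulm (-1) φ hφ
  simpa [neg_one_mul] using h

lemma IsMean.subm (hm : IsMean m) {φ ψ : H → ℝ} (hφ : IsBoundedFn φ) (hψ : IsBoundedFn ψ) :
    m (fun x => φ x - ψ x) = m φ - m ψ := by
  have h := hm.addm φ (fun x => -ψ x) hφ hψ.neg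
  rw [hm.negm hψ] at h
  simpa [sub_eq_add_neg] using h

lemma IsMean.monom (hm : IsMean m) {φ ψ : H → ℝ} (hφ : IsBoundedFn φ) (hψ : IsBoundedFn ψ)
    (h : ∀ x, φ x ≤ ψ x) : m φ ≤ m ψ := by
  have h0 : 0 ≤ m (fun x => ψ x - φ x) :=
    hm.posm _ (hψ.sub hφ) (fun x => sub_nonneg.2 (h x))
  rw [hm.subm hψ hφ] at h0
  linarith

lemma IsMean.absm (hm : IsMean m) {φ : H → ℝ} {C : ℝ} (h : ∀ x, |φ x| ≤ C) : |m φ| ≤ C := by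
  have hφ : IsBoundedFn φ := ⟨C, h⟩
  have h1 : m φ ≤ C := by
    have := hm.monom hφ (isBoundedFn_const C) (fun x => (abs_le.1 (h x)).2)
    rwa [hm.constm] at this
  have h2 : -C ≤ m φ := by
    have := hm.monom (isBoundedFn_const (-C)) hφ (fun x => (abs_le.1 (h x)).1)
    rwa [hm.constm] at this
  exact abs_le.2 ⟨h2, h1⟩

end Mean

lemma exists_rotation {H : Type*} [Group H] {m : (H → ℝ) → ℝ} (hm : IsMean m)
    {f : H → H → ℤ} (hf : IsCircularOrdering f) :
    ∃ τ : H → ℝ, (∀ g h, (f g h : ℝ) = τ g + τ h - τ (g * h)) ∧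
      (∀ g, 0 ≤ τ g) ∧ (∀ g, τ g ≤ 1) ∧ τ 1 = 0 := by
  obtain ⟨hv, hid, hinv, hcoc⟩ := hf
  have hb : ∀ a : H, IsBoundedFn (fun k => (f a k : ℝ)) := fun a =>
    ⟨1, fun k => by rcases hv a k with h | h <;> simp [h]⟩
  refine ⟨fun g => m (fun k => (f g k : ℝ)), ?_, ?_, ?_, ?_⟩
  · intro g h
    show (f g h : ℝ) = m (fun k => (f g k : ℝ)) + m (fun k => (f h k : ℝ))
      - m (fun k => (f (g * h) k : ℝ))
    have e1 : (fun k => (f g (h * k) : ℝ)) =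
        fun k => (f (g * h) k : ℝ) - (f h k : ℝ) + (f g h : ℝ) := by
      funext k
      have h0 : (f h k : ℝ) - (f (g * h) k : ℝ) + (f g (h * k) : ℝ) - (f g h : ℝ) = 0 := by
        exact_mod_cast hcoc g h k
      linarith
    have e2 : m (fun k => (f g (h * k) : ℝ)) = m (fun k => (f g k : ℝ)) :=
      hm.invm h _ (hb g)
    rw [e1] at e2
    have e3 : m (fun k => (f (g * h) k : ℝ) - (f h k : ℝ) + (f g h : ℝ))
        = m (fun k => (f (g * h) k : ℝ)) - m (fun k => (f h k : ℝ)) + (f g h : ℝ) := by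
      have hb2 : IsBoundedFn (fun k => (f (g * h) k : ℝ) - (f h k : ℝ)) := (hb _).sub (hb _)
      have h4 := hm.addm _ (fun _ => (f g h : ℝ)) hb2 (isBoundedFn_const _)
      rw [hm.constm, hm.subm (hb _) (hb _)] at h4
      exact h4
    rw [e3] at e2
    linarith
  · intro g
    exact hm.posm _ (hb g) (fun k => by rcases hv g k with h | h <;> simp [h])
  · intro g
    have := hm.monom (hb g) (isBoundedFn_const 1)
      (fun k => by rcases hv g k with h | h <;> simp [h])
    rwa [hm.constm] at this
  · show m (fun k => (f 1 k : ℝ)) = 0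
    rw [show (fun k => ((f 1 k : ℤ) : ℝ)) = (fun _ : H => (0 : ℝ)) from
      funext fun k => by simp [(hid k).1]]
    exact hm.constm 0

lemma IsCircularOrdering.pullback {G H : Type*} [Group G] [Group H] (φ : G →* H)
    (hinj : Function.Injective φ) {F : H → H → ℤ} (hF : IsCircularOrdering F) :
    IsCircularOrdering (fun g h => F (φ g) (φ h)) := by
  obtain ⟨hv, hid, hinv, hcoc⟩ := hF
  refine ⟨fun g h => hv _ _, fun g => ?_, fun g hg => ?_,
    fun g h k => by
      show F (φ h) (φ k) - F (φ (g * h)) (φ k) + F (φ g) (φ (h * k)) - F (φ g) (φ h) = 0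
      rw [map_mul, map_mul]; exact hcoc _ _ _⟩
  · simp only [map_one]
    exact ⟨(hid (φ g)).1, (hid (φ g)).2⟩
  · have hne : φ g ≠ 1 := fun h => hg (hinj (h.trans (map_one φ).symm))
    show F (φ g) (φ g⁻¹) = 1
    rw [map_inv]
    exact hinv _ hne

lemma leftOrderable_of_integral {G : Type*} [Group G] {f : G → G → ℤ}
    (hf : IsCircularOrdering f) (σ : G → ℝ)
    (hδ : ∀ g h, (f g h : ℝ) = σ g + σ h - σ (g * h))
    (h01 : ∀ g, σ g = 0 ∨ σ g = 1) (h1 : σ 1 = 0) : LeftOrderable G := by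
  obtain ⟨hv, hid, hinv, hcoc⟩ := hf
  have key : ∀ a : G, a ≠ 1 → σ a + σ a⁻¹ = 1 := by
    intro a ha
    have h2 := hδ a a⁻¹
    rw [mul_inv_cancel, h1, hinv a ha] at h2
    push_cast at h2
    linarith
  refine ⟨fun a b => σ (a⁻¹ * b) = 1, ?_, ?_⟩
  · refine { trichotomous := ?_, irrefl := ?_, trans := ?_ }
    · intro a b
      by_cases hab : a = b
      · exact fun _ _ => hab
      · have hne : a⁻¹ * b ≠ 1 := fun h => hab (eq_of_inv_mul_eq_one h)
        have hinveq : (a⁻¹ * b)⁻¹ = b⁻¹ * a := by group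
        have hsum : σ (a⁻¹ * b) + σ (b⁻¹ * a) = 1 := by
          rw [← hinveq]; exact key _ hne
        rcases h01 (a⁻¹ * b) with h | h
        · intro _ h2'; exfalso; apply h2'; linarith
        · intro h1' _; exact absurd h h1'
    · intro a h
      rw [inv_mul_cancel, h1] at h
      norm_num at h
    · intro a b c h₁ h₂
      have hδ' := hδ (a⁻¹ * b) (b⁻¹ * c)
      have hmul : (a⁻¹ * b) * (b⁻¹ * c) = a⁻¹ * c := by group
      rw [hmul, h₁, h₂] at hδ'
      rcases h01 (a⁻¹ * c) with h' | h'
      · exfalso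
        rcases hv (a⁻¹ * b) (b⁻¹ * c) with h | h <;> rw [h, h'] at hδ' <;> norm_num at hδ'
      · exact h'
  · intro a b c h
    have : (a * b)⁻¹ * (a * c) = b⁻¹ * c := by group
    rw [this]
    exact h

lemma pow_tau {G : Type*} [Group G] (σ : G → ℝ) (h1 : σ 1 = 0)
    (hq : ∀ g h : G, ∃ z : ℤ, σ (g * h) - σ g - σ h = z) (g : G) :
    ∀ k : ℕ, ∃ z : ℤ, σ (g ^ k) = k * σ g + z := by
  intro k
  induction k with
  | zero => exact ⟨0, by simp [h1]⟩
  | succ n ih =>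
    obtain ⟨z, hz⟩ := ih
    obtain ⟨w, hw⟩ := hq (g ^ n) g
    refine ⟨z + w, ?_⟩
    rw [pow_succ]
    push_cast
    linarith

lemma exists_int_card_smul {G : Type*} [Group G] [Finite (Abelianization G)] (σ : G → ℝ)
    (h1 : σ 1 = 0) (hq : ∀ g h : G, ∃ z : ℤ, σ (g * h) - σ g - σ h = z) (g : G) :
    ∃ z : ℤ, (Nat.card (Abelianization G) : ℝ) * σ g = z := by
  set e := Nat.card (Abelianization G) with he
  let ρ : G →* Multiplicative (AddCircle (1 : ℝ)) :=
    { toFun := fun x => Multiplicative.ofAdd ((σ x : ℝ) : AddCircle (1 : ℝ))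
      map_one' := by
        show Multiplicative.ofAdd ((σ 1 : ℝ) : AddCircle (1 : ℝ)) = 1
        rw [h1]
        exact ofAdd_eq_one.mpr ((AddCircle.coe_eq_zero_iff (1 : ℝ)).mpr ⟨0, by simp⟩)
      map_mul' := by
        intro a b
        obtain ⟨z, hz⟩ := hq a b
        show Multiplicative.ofAdd ((σ (a * b) : ℝ) : AddCircle (1 : ℝ)) =
          Multiplicative.ofAdd ((σ a : ℝ) : AddCircle (1 : ℝ)) *
          Multiplicative.ofAdd ((σ b : ℝ) : AddCircle (1 : ℝ))
        rw [← ofAdd_add]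
        congr 1
        rw [← QuotientAddGroup.mk_add]
        rw [QuotientAddGroup.eq_iff_sub_mem]
        refine AddSubgroup.mem_zmultiples_iff.mpr ⟨z, ?_⟩
        simp only [zsmul_eq_mul, mul_one]
        linarith }
  have hp : ρ (g ^ e) = 1 := by
    have h2 : Abelianization.of (g ^ e) = 1 := by
      rw [map_pow, he, pow_card_eq_one']
    calc ρ (g ^ e) = Abelianization.lift ρ (Abelianization.of (g ^ e)) :=
          (Abelianization.lift_apply_of ρ _).symm
      _ = 1 := by rw [h2, map_one]
  have hp2 : ((σ (g ^ e) : ℝ) : AddCircle (1 : ℝ)) = 0 := by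
    have : Multiplicative.ofAdd ((σ (g ^ e) : ℝ) : AddCircle (1 : ℝ)) = 1 := hp
    exact ofAdd_eq_one.mp this
  obtain ⟨z0, hz0⟩ := (AddCircle.coe_eq_zero_iff (1 : ℝ)).mp hp2
  simp only [zsmul_eq_mul, mul_one] at hz0
  obtain ⟨z, hz⟩ := pow_tau σ h1 hq g e
  exact ⟨z0 - z, by push_cast; linarith [hz0, hz]⟩

lemma tau_list {H : Type*} [Group H] {F : H → H → ℤ} (τ : H → ℝ)
    (hδ : ∀ x y, (F x y : ℝ) = τ x + τ y - τ (x * y)) (h1 : τ 1 = 0) :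
    ∀ L : List H, ∃ z : ℤ, τ L.prod = (L.map τ).sum + z := by
  intro L
  induction L with
  | nil => exact ⟨0, by simp [h1]⟩
  | cons a L ih =>
    obtain ⟨z, hz⟩ := ih
    refine ⟨z - F a L.prod, ?_⟩
    rw [List.prod_cons, List.map_cons, List.sum_cons]
    have := hδ a L.prod
    push_cast
    linarith

lemma ite_list_prod {G : Type*} [Group G] (g : G) :
    ∀ (n k a : ℕ), ((List.range n).map (fun j => if a = k + j then g else 1)).prod
      = if k ≤ a ∧ a < k + n then g else 1 := by
  intro n
  induction n with
  | zero =>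
    intro k a
    rw [if_neg (by omega)]
    simp
  | succ n ih =>
    intro k a
    rw [List.range_succ, List.map_append, List.prod_append, ih k a]
    simp only [List.map_cons, List.map_nil, List.prod_cons, List.prod_nil, mul_one]
    by_cases h2 : a = k + n
    · rw [if_pos h2, if_neg (by omega), one_mul, if_pos (by omega)]
    · rw [if_neg h2, mul_one]
      by_cases h1 : k ≤ a ∧ a < k + n
      · rw [if_pos h1, if_pos (by omega)]
      · rw [if_neg h1, if_neg (by omega)]

lemma isAmenable_pi {G : Type*} [Group G] (ham : IsAmenable G) (n : ℕ) :
    IsAmenable (Fin n → G) := by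
  induction n with
  | zero =>
    refine ⟨fun φ => φ 1, fun φ ψ _ _ => rfl, fun c φ _ => rfl, rfl, fun φ _ h => h 1, ?_⟩
    intro g φ _
    have hg : g = 1 := funext fun i => i.elim0
    show φ (g * 1) = φ 1
    rw [hg, one_mul]
  | succ n ih =>
    obtain ⟨m, hm⟩ := ham
    obtain ⟨M, hM⟩ := ih
    have hM' : IsMean M := hM
    have hm' : IsMean m := hm
    -- inner restriction is bounded
    have hbin : ∀ (φ : (Fin (n + 1) → G) → ℝ) (C : ℝ), (∀ x, |φ x| ≤ C) →
        ∀ y : Fin n → G, IsBoundedFn (fun a : G => φ (Fin.cons a y)) :=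
      fun φ C hC y => ⟨C, fun a => hC _⟩
    have hbout : ∀ (φ : (Fin (n + 1) → G) → ℝ) (C : ℝ), (∀ x, |φ x| ≤ C) →
        ∀ y : Fin n → G, |m (fun a : G => φ (Fin.cons a y))| ≤ C :=
      fun φ C hC y => hm'.absm (fun a => hC _)
    refine ⟨fun φ => M (fun y => m (fun a => φ (Fin.cons a y))), ?_, ?_, ?_, ?_, ?_⟩
    · intro φ ψ hφ hψ
      obtain ⟨C, hC⟩ := hφ
      obtain ⟨D, hD⟩ := hψ
      have h1 : (fun y : Fin n → G => m (fun a => φ (Fin.cons a y) + ψ (Fin.cons a y)))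
          = fun y => m (fun a => φ (Fin.cons a y)) + m (fun a => ψ (Fin.cons a y)) :=
        funext fun y => hm'.addm _ _ (hbin φ C hC y) (hbin ψ D hD y)
      show M (fun y => m (fun a => φ (Fin.cons a y) + ψ (Fin.cons a y))) = _
      rw [h1]
      exact hM'.addm _ _ ⟨C, fun y => hbout φ C hC y⟩ ⟨D, fun y => hbout ψ D hD y⟩
    · intro c φ hφ
      obtain ⟨C, hC⟩ := hφ
      have h1 : (fun y : Fin n → G => m (fun a => c * φ (Fin.cons a y)))
          = fun y => c * m (fun a => φ (Fin.cons a y)) :=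
        funext fun y => hm'.smulm c _ (hbin φ C hC y)
      show M (fun y => m (fun a => c * φ (Fin.cons a y))) = _
      rw [h1]
      exact hM'.smulm c _ ⟨C, fun y => hbout φ C hC y⟩
    · show M (fun y => m (fun _ => 1)) = 1
      rw [show (fun y : Fin n → G => m (fun _ => (1 : ℝ))) = fun _ => (1 : ℝ) from
        funext fun y => hm'.onem]
      exact hM'.onem
    · intro φ hφ hpos
      obtain ⟨C, hC⟩ := hφ
      exact hM'.posm _ ⟨C, fun y => hbout φ C hC y⟩
        (fun y => hm'.posm _ (hbin φ C hC y) (fun a => hpos _))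
    · intro g φ hφ
      obtain ⟨C, hC⟩ := hφ
      have hcons : ∀ (a : G) (y : Fin n → G),
          g * Fin.cons a y = Fin.cons (g 0 * a) (Fin.tail g * y) := by
        intro a y
        funext i
        refine Fin.cases ?_ ?_ i
        · simp [Fin.tail]
        · intro j
          simp [Fin.tail]
      have h1 : (fun y : Fin n → G => m (fun a => φ (g * Fin.cons a y)))
          = fun y => m (fun a => φ (Fin.cons a (Fin.tail g * y))) := by
        funext y
        have h2 : (fun a : G => φ (g * Fin.cons a y))
            = fun a => (fun b : G => φ (Fin.cons b (Fin.tail g * y))) (g 0 * a) := by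
          funext a
          rw [hcons a y]
        rw [h2]
        exact hm'.invm (g 0) _ (hbin φ C hC _)
      show M (fun y => m (fun a => φ (g * Fin.cons a y))) = _
      rw [h1]
      exact hM'.invm (Fin.tail g) _ ⟨C, fun y => hbout φ C hC y⟩

/-- If `G` is a finitely generated, amenable, circularly-orderable group that is not
left-orderable and whose abelianization is finite, then some finite direct power `Gⁿ`
(`n ≥ 2`) of `G` is not circularly-orderable. -/
theorem amenable_power_not_circularlyOrderable {G : Type*} [Group G]
    (hfg : Group.FG G) (ham : IsAmenable G)
    (hco : CircularlyOrderable G) (hnlo : ¬ LeftOrderable G)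
    (hab : Finite (Abelianization G)) :
    ∃ n : ℕ, 2 ≤ n ∧ ¬ CircularlyOrderable (Fin n → G) := by
  classical
  haveI := hab
  set e := Nat.card (Abelianization G) with he
  have he1 : 1 ≤ e := Nat.card_pos
  haveI : NeZero e := ⟨by omega⟩
  haveI : Finite (Abelianization G →* Multiplicative (ZMod e)) :=
    Finite.of_injective _ DFunLike.coe_injective
  haveI : Fintype (Abelianization G →* Multiplicative (ZMod e)) := Fintype.ofFinite _
  haveI : Nonempty (Abelianization G →* Multiplicative (ZMod e)) := ⟨1⟩
  set N := Fintype.card (Abelianization G →* Multiplicative (ZMod e)) with hNdef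
  have hN1 : 0 < N := Fintype.card_pos
  refine ⟨N + 1, by omega, ?_⟩
  rintro ⟨F, hF⟩
  obtain ⟨m, hm'⟩ := isAmenable_pi ham (N + 1)
  have hm : IsMean m := hm'
  obtain ⟨τ, hδ, hτ0, hτ1, hτe⟩ := exists_rotation hm hF
  -- quasimorphism property along any homomorphism into the power
  have hquasi : ∀ (ψ : G →* (Fin (N + 1) → G)) (a b : G),
      ∃ z : ℤ, τ (ψ (a * b)) - τ (ψ a) - τ (ψ b) = z := by
    intro ψ a b
    exact ⟨-(F (ψ a) (ψ b)), by rw [map_mul]; push_cast; linarith [hδ (ψ a) (ψ b)]⟩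
  -- integrality of e * τ along any homomorphism
  have hz : ∀ (ψ : G →* (Fin (N + 1) → G)) (g : G), ∃ w : ℤ, (e : ℝ) * τ (ψ g) = w := by
    intro ψ g
    exact exists_int_card_smul (σ := fun x => τ (ψ x))
      (by show τ (ψ 1) = 0; rw [map_one]; exact hτe) (fun a b => hquasi ψ a b) g
  choose W hW using hz
  have hWmul : ∀ (ψ : G →* (Fin (N + 1) → G)) (a b : G),
      ((W ψ (a * b) : ℤ) : ZMod e) = ((W ψ a : ℤ) : ZMod e) + ((W ψ b : ℤ) : ZMod e) := by
    intro ψ a b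
    obtain ⟨w, hw⟩ := hquasi ψ a b
    have hint : W ψ (a * b) = W ψ a + W ψ b + e * w := by
      have hr : (W ψ (a * b) : ℝ) = (W ψ a : ℝ) + (W ψ b : ℝ) + (e : ℝ) * w := by
        rw [← hW ψ (a * b), ← hW ψ a, ← hW ψ b]
        have h2 : τ (ψ (a * b)) = τ (ψ a) + τ (ψ b) + w := by linarith [hw]
        rw [h2]; ring
      exact_mod_cast hr
    rw [hint]
    push_cast
    simp [ZMod.natCast_self]
  -- the mod-e characters
  let χ : (G →* (Fin (N + 1) → G)) → (G →* Multiplicative (ZMod e)) := fun ψ =>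
    { toFun := fun g => Multiplicative.ofAdd ((W ψ g : ZMod e))
      map_one' := by
        have h0 : (W ψ 1 : ℝ) = 0 := by
          rw [← hW ψ 1]
          have : τ (ψ 1) = 0 := by rw [map_one]; exact hτe
          rw [this, mul_zero]
        have h1 : W ψ 1 = 0 := by exact_mod_cast h0
        show Multiplicative.ofAdd ((W ψ 1 : ZMod e)) = 1
        rw [h1]
        simp
      map_mul' := fun a b => by
        show Multiplicative.ofAdd ((W ψ (a * b) : ZMod e)) = _
        rw [hWmul ψ a b, ofAdd_add] }
  -- pigeonhole on partial products of the characters of the coordinate embeddings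
  let c : ℕ → (Abelianization G →* Multiplicative (ZMod e)) := fun i =>
    if h : i < N + 1 then
      Abelianization.lift (χ (MonoidHom.mulSingle (fun _ : Fin (N + 1) => G) ⟨i, h⟩)) else 1
  obtain ⟨k, l, hkl, hkleq0⟩ := Fintype.exists_ne_map_eq_of_card_lt
    (fun k : Fin (N + 2) => ∏ i ∈ Finset.range k.val, c i)
    (by rw [Fintype.card_fin]; omega)
  have hkleq : (∏ i ∈ Finset.range (k : ℕ), c i) = ∏ i ∈ Finset.range (l : ℕ), c i := hkleq0
  have hvne : (k : ℕ) ≠ (l : ℕ) := fun hh => hkl (Fin.ext hh)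
  have hmain : ∃ kv lv : ℕ, kv < lv ∧ lv ≤ N + 1 ∧ (∏ i ∈ Finset.Ico kv lv, c i) = 1 := by
    rcases Nat.lt_or_ge (k : ℕ) (l : ℕ) with h | h
    · refine ⟨k, l, h, by have := l.isLt; omega, ?_⟩
      rw [Finset.prod_Ico_eq_div _ (Nat.le_of_lt h), ← hkleq, div_self']
    · have h' : (l : ℕ) < (k : ℕ) := lt_of_le_of_ne h (Ne.symm hvne)
      refine ⟨l, k, h', by have := k.isLt; omega, ?_⟩
      rw [Finset.prod_Ico_eq_div _ (Nat.le_of_lt h'), hkleq, div_self']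
  obtain ⟨kv, lv, hkvlv, hlvN, hcprod⟩ := hmain
  -- the block-diagonal embedding
  let d : G →* (Fin (N + 1) → G) :=
    { toFun := fun g t => if kv ≤ (t : ℕ) ∧ (t : ℕ) < lv then g else 1
      map_one' := by funext t; simp
      map_mul' := fun a b => by
        funext t
        show (if kv ≤ (t : ℕ) ∧ (t : ℕ) < lv then a * b else 1) =
          (if kv ≤ (t : ℕ) ∧ (t : ℕ) < lv then a else 1) *
          (if kv ≤ (t : ℕ) ∧ (t : ℕ) < lv then b else 1)
        by_cases h : kv ≤ (t : ℕ) ∧ (t : ℕ) < lv <;> simp [h] }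
  have hdinj : Function.Injective d := by
    intro a b hab2
    have h2 : (if kv ≤ kv ∧ kv < lv then a else 1) = (if kv ≤ kv ∧ kv < lv then b else 1) :=
      congrFun hab2 ⟨kv, by omega⟩
    rwa [if_pos ⟨le_refl kv, hkvlv⟩, if_pos ⟨le_refl kv, hkvlv⟩] at h2
  -- the coordinate building blocks
  let u : G → ℕ → (Fin (N + 1) → G) := fun g i =>
    if h : i < N + 1 then Pi.mulSingle (⟨i, h⟩ : Fin (N + 1)) g else 1
  have hu_eq : ∀ (g : G) (i : ℕ) (h : i < N + 1),
      u g i = Pi.mulSingle (⟨i, h⟩ : Fin (N + 1)) g := fun g i h => dif_pos h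
  have hc_eq : ∀ (i : ℕ) (h : i < N + 1), c i = Abelianization.lift
      (χ (MonoidHom.mulSingle (fun _ : Fin (N + 1) => G) ⟨i, h⟩)) := fun i h => dif_pos h
  have hdlist : ∀ g : G,
      d g = ((List.range (lv - kv)).map (fun j => u g (kv + j))).prod := by
    intro g
    funext t
    have h1 : (((List.range (lv - kv)).map (fun j => u g (kv + j))).prod) t
        = ((List.range (lv - kv)).map (fun j => u g (kv + j) t)).prod := by
      have h0 := map_list_prod (Pi.evalMonoidHom (fun _ : Fin (N + 1) => G) t)
        ((List.range (lv - kv)).map (fun j => u g (kv + j)))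
      simpa [List.map_map, Function.comp_def, Function.eval, Pi.evalMonoidHom_apply] using h0
    have h2 : (List.range (lv - kv)).map (fun j => u g (kv + j) t)
        = (List.range (lv - kv)).map (fun j => if (t : ℕ) = kv + j then g else 1) := by
      refine List.map_congr_left ?_
      intro j hj
      have hj' : j < lv - kv := List.mem_range.mp hj
      have hb : kv + j < N + 1 := by omega
      rw [hu_eq g (kv + j) hb, Pi.mulSingle_apply]
      simp [Fin.ext_iff]
    rw [h1, h2, ite_list_prod, show kv + (lv - kv) = lv from by omega]
    rfl
  -- integrality of τ on the image of d
  have hdint : ∀ g : G, τ (d g) = 0 ∨ τ (d g) = 1 := by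
    intro g
    set Zc : ℕ → ℤ := fun i =>
      if h : i < N + 1 then W (MonoidHom.mulSingle (fun _ : Fin (N + 1) => G) ⟨i, h⟩) g else 0
      with hZc
    have hZc_eq : ∀ (i : ℕ) (h : i < N + 1),
        Zc i = W (MonoidHom.mulSingle (fun _ : Fin (N + 1) => G) ⟨i, h⟩) g :=
      fun i h => dif_pos h
    obtain ⟨zM, hzM⟩ := tau_list τ hδ hτe ((List.range (lv - kv)).map (fun j => u g (kv + j)))
    rw [List.map_map] at hzM
    have hzM' : τ (d g) = (∑ j ∈ Finset.range (lv - kv), τ (u g (kv + j))) + zM := by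
      rw [hdlist g]; exact hzM
    -- each coordinate term
    have hterm : ∀ j ∈ Finset.range (lv - kv), (e : ℝ) * τ (u g (kv + j)) = (Zc (kv + j) : ℝ) := by
      intro j hj
      have hj' : j < lv - kv := Finset.mem_range.mp hj
      have hb : kv + j < N + 1 := by omega
      have h7 := hW (MonoidHom.mulSingle (fun _ : Fin (N + 1) => G)
        (⟨kv + j, hb⟩ : Fin (N + 1))) g
      rw [MonoidHom.mulSingle_apply] at h7
      rw [hu_eq g (kv + j) hb, hZc_eq (kv + j) hb]
      exact h7
    set SZ : ℤ := ∑ j ∈ Finset.range (lv - kv), Zc (kv + j) with hSZ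
    have hreal : (W d g : ℝ) = (SZ : ℝ) + (e : ℝ) * zM := by
      rw [← hW d g, hzM', mul_add, Finset.mul_sum, Finset.sum_congr rfl hterm, hSZ]
      push_cast
      ring
    have hint2 : W d g = SZ + e * zM := by exact_mod_cast hreal
    -- the sum vanishes mod e
    have hev : ∏ i ∈ Finset.Ico kv lv, (c i (Abelianization.of g)) = 1 := by
      rw [← Finset.prod_apply, ← MonoidHom.coe_finset_prod, hcprod]
      rfl
    have hev2 : ∏ i ∈ Finset.Ico kv lv,
        Multiplicative.ofAdd ((Zc i : ZMod e)) = 1 := by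
      rw [← hev]
      refine Finset.prod_congr rfl ?_
      intro i hi
      have hi' : kv ≤ i ∧ i < lv := Finset.mem_Ico.mp hi
      have hb : i < N + 1 := by omega
      rw [hc_eq i hb, Abelianization.lift_apply_of]
      show Multiplicative.ofAdd ((Zc i : ZMod e)) = Multiplicative.ofAdd
        ((W (MonoidHom.mulSingle (fun _ : Fin (N + 1) => G) ⟨i, hb⟩) g : ZMod e))
      rw [hZc_eq i hb]
    have hsum0 : (∑ i ∈ Finset.Ico kv lv, ((Zc i : ZMod e))) = 0 := by
      have := hev2
      rw [← ofAdd_sum] at this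
      exact ofAdd_eq_one.mp this
    have hSZ0 : ((SZ : ℤ) : ZMod e) = 0 := by
      rw [hSZ]
      push_cast
      rw [← hsum0, Finset.sum_Ico_eq_sum_range]
    -- conclude divisibility
    have hdvd : (e : ℤ) ∣ W d g := by
      have : ((W d g : ℤ) : ZMod e) = 0 := by
        rw [hint2]
        push_cast
        rw [hSZ0]
        simp [ZMod.natCast_self]
      exact (ZMod.intCast_zmod_eq_zero_iff_dvd _ _).mp this
    obtain ⟨w, hw⟩ := hdvd
    have htau : τ (d g) = (w : ℝ) := by
      have h3 : (e : ℝ) * τ (d g) = (e : ℝ) * (w : ℝ) := by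
        rw [hW d g, hw]; push_cast; ring
      have h4 : (e : ℝ) ≠ 0 := by positivity
      exact mul_left_cancel₀ h4 h3
    have hw0 : (0 : ℝ) ≤ w := by rw [← htau]; exact hτ0 _
    have hw1 : (w : ℝ) ≤ 1 := by rw [← htau]; exact hτ1 _
    have : w = 0 ∨ w = 1 := by
      have h5 : (0 : ℤ) ≤ w := by exact_mod_cast hw0
      have h6 : w ≤ 1 := by exact_mod_cast hw1
      omega
    rcases this with h | h <;> [left; right] <;> rw [htau, h] <;> norm_num
  -- conclude left-orderability of G, contradiction
  have hδ' : ∀ a b : G, ((F (d a) (d b) : ℤ) : ℝ) = τ (d a) + τ (d b) - τ (d (a * b)) := by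
    intro a b
    rw [map_mul]
    exact hδ (d a) (d b)
  exact hnlo (leftOrderable_of_integral (hF.pullback d hdinj) (fun g => τ (d g)) hδ' hdint
    (by show τ (d 1) = 0; rw [map_one]; exact hτe))
end
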